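/- arXiv:math/0703921 — 9 statements merged into one kernel-verified Lean document; each statement's English description precedes it below -/
import Mathlib

section
/- Let k ≥ 1, s ≥ 2 and 0 ≤ ℓ ≤ s·k − 1 be integers. Then there exists an integer n₁ (depending on s, k and ℓ) such that for every n ≥ n₁ there exists an s-uniform (k,ℓ)-tight hypergraph on n vertices. -/
/-!
Coning is the basic operation: adding a fixed set `Z` of `z` new vertices to every edge of a
`(k,l)`-sparse hypergraph yields a `(k, l + kz)`-sparse one. For `l ≤ k(s-1)` take the sunflower
whose core has `s - 1` vertices and whose petals are all other vertices, each with multiplicity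
`k`, and add `k(s-1) - l` copies of one edge. Otherwise `l = k(s-1) + τ` with `τ < k`: cone a
`(τ+1, 2τ+1)`-tight graph (a clique on `2τ+1` vertices, every other vertex joined to `τ+1` of them)
over `s - 2` vertices and add a `(k-τ-1)`-fold sunflower. For `s`-uniform hypergraphs,
`(k₁,l₁)`- and `(k₂,l₂)`-sparsity add up as long as `lᵢ ≤ kᵢ s`, since a set spanning an edge
has at least `s` vertices.
-/

/-- The number of edges of the multiset `E` spanned by the vertex set `W`. -/
def spanCount {V : Type*} [DecidableEq V] (E : Multiset (Finset V)) (W : Finset V) : ℕ :=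
  (E.filter fun e => e ⊆ W).card

/-- A hypergraph with edge multiset `E` is `(k,ℓ)`-sparse if every vertex subset spanning
at least one edge spans at most `k|W| - ℓ` edges. -/
def Sparse {V : Type*} [DecidableEq V] (k l : ℕ) (E : Multiset (Finset V)) : Prop :=
  ∀ W : Finset V, 1 ≤ spanCount E W → spanCount E W + l ≤ k * W.card

open Finset

section General

variable {V : Type*} [DecidableEq V]

lemma spanCount_add (E₁ E₂ : Multiset (Finset V)) (W : Finset V) :
    spanCount (E₁ + E₂) W = spanCount E₁ W + spanCount E₂ W := by
  simp [spanCount, Multiset.filter_add]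

lemma spanCount_nsmul (k : ℕ) (E : Multiset (Finset V)) (W : Finset V) :
    spanCount (k • E) W = k * spanCount E W := by
  simp [spanCount, Multiset.filter_nsmul]

lemma spanCount_le_card (E : Multiset (Finset V)) (W : Finset V) :
    spanCount E W ≤ Multiset.card E :=
  Multiset.card_le_card (Multiset.filter_le _ _)

lemma spanCount_map_val {α : Type*} (A : Finset α) (f : α → Finset V) (W : Finset V) :
    spanCount (A.val.map f) W = #{q ∈ A | f q ⊆ W} := by
  simp only [spanCount, Multiset.filter_map, Function.comp_apply, Multiset.card_map]
  rfl

lemma le_card_of_one_le_spanCount {s : ℕ} {E : Multiset (Finset V)} {W : Finset V}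
    (hE : ∀ e ∈ E, #e = s) (h : 1 ≤ spanCount E W) : s ≤ #W := by
  obtain ⟨e, he⟩ := Multiset.card_pos_iff_exists_mem.1 h
  obtain ⟨heE, heW⟩ := Multiset.mem_filter.1 he
  exact hE e heE ▸ card_le_card heW

lemma spanCount_map_image {V' : Type*} [DecidableEq V'] {f : V → V'} (hf : f.Injective)
    (E : Multiset (Finset V)) (W : Finset V) :
    spanCount (E.map (image f)) (W.image f) = spanCount E W := by
  simp only [spanCount, Multiset.filter_map, Multiset.card_map, Function.comp_def,
    image_subset_image_iff hf]

variable {k l : ℕ} {E : Multiset (Finset V)}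

theorem Sparse.of_map_image {V' : Type*} [DecidableEq V'] {f : V → V'} (hf : f.Injective)
    (h : Sparse k l (E.map (image f))) : Sparse k l E := by
  intro W hW
  rw [← spanCount_map_image hf] at hW ⊢
  simpa [card_image_of_injective _ hf] using h _ hW

lemma Sparse.spanCount_add_le {s : ℕ} (h : Sparse k l E)
    (hl : l ≤ k * s) {W : Finset V} (hW : s ≤ #W) : spanCount E W + l ≤ k * #W := by
  rcases Nat.eq_zero_or_pos (spanCount E W) with h0 | hpos
  · rw [h0, zero_add]
    exact hl.trans (Nat.mul_le_mul_left k hW)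
  · exact h W hpos

theorem Sparse.add {k₁ l₁ k₂ l₂ s : ℕ} {E₁ E₂ : Multiset (Finset V)}
    (h₁ : Sparse k₁ l₁ E₁) (h₂ : Sparse k₂ l₂ E₂)
    (hE₁ : ∀ e ∈ E₁, #e = s) (hE₂ : ∀ e ∈ E₂, #e = s) (hl₁ : l₁ ≤ k₁ * s) (hl₂ : l₂ ≤ k₂ * s) :
    Sparse (k₁ + k₂) (l₁ + l₂) (E₁ + E₂) := by
  intro W hW
  rw [spanCount_add] at hW ⊢
  have hs : s ≤ #W := by
    rcases Nat.eq_zero_or_pos (spanCount E₁ W) with h0 | hpos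
    · exact le_card_of_one_le_spanCount hE₂ (by omega)
    · exact le_card_of_one_le_spanCount hE₁ hpos
  have := h₁.spanCount_add_le hl₁ hs
  have := h₂.spanCount_add_le hl₂ hs
  rw [add_mul]
  omega

def cone (Z : Finset V) (E : Multiset (Finset V)) : Multiset (Finset V) :=
  E.map (· ∪ Z)

variable {Z W : Finset V}

lemma card_cone : Multiset.card (cone Z E) = Multiset.card E :=
  Multiset.card_map _ _

lemma card_of_mem_cone {r : ℕ} (hE : ∀ e ∈ E, #e = r) (hZ : ∀ e ∈ E, Disjoint e Z) :
    ∀ e ∈ cone Z E, #e = r + #Z := by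
  simp only [cone, Multiset.mem_map]
  rintro _ ⟨e, he, rfl⟩
  rw [card_union_of_disjoint (hZ e he), hE e he]

lemma spanCount_cone_of_not_subset (h : ¬Z ⊆ W) : spanCount (cone Z E) W = 0 := by
  simp only [spanCount, cone, Multiset.filter_map, Multiset.card_map, Multiset.card_eq_zero,
    Multiset.filter_eq_nil, Function.comp_apply, union_subset_iff]
  tauto

lemma spanCount_cone_of_subset (hZ : ∀ e ∈ E, Disjoint e Z) (h : Z ⊆ W) :
    spanCount (cone Z E) W = spanCount E (W \ Z) := by
  simp only [spanCount, cone, Multiset.filter_map, Multiset.card_map]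
  congr 1
  refine Multiset.filter_congr fun e he => ?_
  simp [union_subset_iff, subset_sdiff, hZ e he, h]

theorem Sparse.cone (h : Sparse k l E) (hZ : ∀ e ∈ E, Disjoint e Z) :
    Sparse k (l + k * #Z) (cone Z E) := by
  intro W hW
  by_cases hZW : Z ⊆ W
  · rw [spanCount_cone_of_subset hZ hZW] at hW ⊢
    have := h _ hW
    rw [← card_sdiff_add_card_eq_card hZW, mul_add]
    omega
  · rw [spanCount_cone_of_not_subset hZW] at hW
    omega

end General

lemma subset_range_of_mem_cone {m n : ℕ} {E : Multiset (Finset ℕ)}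
    (hE : ∀ e ∈ E, e ⊆ range m) (hmn : m ≤ n) : ∀ e ∈ cone (Ico m n) E, e ⊆ range n := by
  simp only [cone, Multiset.mem_map]
  rintro _ ⟨e, he, rfl⟩
  exact union_subset ((hE e he).trans (range_subset_range.2 hmn))
    fun a ha => mem_range.2 (mem_Ico.1 ha).2

lemma disjoint_Ico_of_subset_range {e : Finset ℕ} {m n : ℕ} (he : e ⊆ range m) :
    Disjoint e (Ico m n) :=
  disjoint_of_subset_left he <| disjoint_left.2 fun _ ha hb =>
    (mem_Ico.1 hb).1.not_gt (mem_range.1 ha)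

def stars (k x m : ℕ) : Multiset (Finset ℕ) :=
  k • (range m).val.map ({·}) + Multiset.replicate x {0}

lemma card_stars (k x m : ℕ) : Multiset.card (stars k x m) = k * m + x := by
  simp [stars]

lemma subset_range_of_mem_stars {k x m : ℕ} (hm : 0 < m) : ∀ e ∈ stars k x m, e ⊆ range m := by
  intro e he
  rcases Multiset.mem_add.1 he with he | he
  · obtain ⟨j, hj, rfl⟩ := Multiset.mem_map.1 (Multiset.mem_of_mem_nsmul he)
    simpa using hj
  · rw [Multiset.eq_of_mem_replicate he]
    simpa using hm

lemma disjoint_Ico_of_mem_stars {k x m n : ℕ} (hm : 0 < m) :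
    ∀ e ∈ stars k x m, Disjoint e (Ico m n) := fun e he =>
  disjoint_Ico_of_subset_range (subset_range_of_mem_stars hm e he)

lemma card_of_mem_stars {k x m : ℕ} : ∀ e ∈ stars k x m, #e = 1 := by
  intro e he
  rcases Multiset.mem_add.1 he with he | he
  · obtain ⟨j, -, rfl⟩ := Multiset.mem_map.1 (Multiset.mem_of_mem_nsmul he)
    rfl
  · rw [Multiset.eq_of_mem_replicate he]
    rfl

lemma spanCount_stars_le (k x m : ℕ) (W : Finset ℕ) : spanCount (stars k x m) W ≤ k * #W + x := by
  rw [stars, spanCount_add, spanCount_nsmul, spanCount_map_val]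
  have h₁ : #{j ∈ range m | {j} ⊆ W} ≤ #W :=
    card_le_card fun j hj => singleton_subset_iff.1 (mem_filter.1 hj).2
  have h₂ := spanCount_le_card (Multiset.replicate x {0}) W
  rw [Multiset.card_replicate] at h₂
  nlinarith

theorem sparse_cone_stars {k x l m n : ℕ} (hm : 0 < m) (hl : l + x = k * (n - m)) :
    Sparse k l (cone (Ico m n) (stars k x m)) := by
  intro W hW
  by_cases hZW : Ico m n ⊆ W
  · rw [spanCount_cone_of_subset (disjoint_Ico_of_mem_stars hm) hZW] at hW ⊢
    have := spanCount_stars_le k x m (W \ Ico m n)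
    rw [← card_sdiff_add_card_eq_card hZW, Nat.card_Ico, mul_add]
    omega
  · rw [spanCount_cone_of_not_subset hZW] at hW
    omega

def extendedClique (τ m : ℕ) : Multiset (Finset ℕ) :=
  (powersetCard 2 (range (2 * τ + 1))).val +
    ((Ico (2 * τ + 1) m) ×ˢ range (τ + 1)).val.map fun q => {q.1, q.2}

lemma card_extendedClique {τ m : ℕ} (hm : 2 * τ + 1 ≤ m) :
    Multiset.card (extendedClique τ m) + (2 * τ + 1) = (τ + 1) * m := by
  obtain ⟨p, rfl⟩ := Nat.exists_eq_add_of_le hm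
  have : (2 * τ + 1).choose 2 = τ * (2 * τ + 1) := by
    rw [Nat.choose_two_right, Nat.add_sub_cancel, mul_comm, mul_assoc,
      Nat.mul_div_cancel_left _ two_pos]
  rw [extendedClique, Multiset.card_add, Multiset.card_map, card_val, card_val, card_powersetCard,
    card_product, card_range, card_range, Nat.card_Ico, add_tsub_cancel_left, this]
  ring

lemma subset_range_of_mem_extendedClique {τ m : ℕ} (hm : 2 * τ + 1 ≤ m) :
    ∀ e ∈ extendedClique τ m, e ⊆ range m := by
  intro e he
  rcases Multiset.mem_add.1 he with he | he
  · exact (mem_powersetCard.1 (mem_def.2 he)).1.trans (range_subset_range.2 hm)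
  · obtain ⟨⟨i, j⟩, hij, rfl⟩ := Multiset.mem_map.1 he
    simp only [mem_val, mem_product, mem_Ico, mem_range] at hij
    intro a ha
    simp only [mem_insert, mem_singleton] at ha
    rcases ha with rfl | rfl <;> simp only [mem_range] <;> omega

lemma card_of_mem_extendedClique {τ m : ℕ} : ∀ e ∈ extendedClique τ m, #e = 2 := by
  intro e he
  rcases Multiset.mem_add.1 he with he | he
  · exact (mem_powersetCard.1 (mem_def.2 he)).2
  · obtain ⟨⟨i, j⟩, hij, rfl⟩ := Multiset.mem_map.1 he
    simp only [mem_val, mem_product, mem_Ico, mem_range] at hij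
    exact card_pair (by omega)

lemma spanCount_extendedClique (τ m : ℕ) (W : Finset ℕ) :
    spanCount (extendedClique τ m) W =
      (#(range (2 * τ + 1) ∩ W)).choose 2 + #(Ico (2 * τ + 1) m ∩ W) * #(range (τ + 1) ∩ W) := by
  rw [extendedClique, spanCount_add, spanCount_map_val, ← card_powersetCard, ← card_product]
  congr 1
  · change #{e ∈ powersetCard 2 (range (2 * τ + 1)) | e ⊆ W} = _
    congr 1
    ext e
    simp only [mem_filter, mem_powersetCard, subset_inter_iff]
    tauto
  · congr 1
    ext ⟨i, j⟩
    simp only [mem_filter, mem_product, mem_inter, insert_subset_iff, singleton_subset_iff]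
    tauto

lemma choose_two_add_mul_add_le {τ a t β : ℕ} (ha : a ≤ 2 * τ + 1) (hβτ : β ≤ τ + 1)
    (hβa : β ≤ a) (hpos : 1 ≤ a.choose 2 + t * β) :
    a.choose 2 + t * β + (2 * τ + 1) ≤ (τ + 1) * (a + t) := by
  rcases lt_or_ge a 2 with ha2 | ha2
  · rw [Nat.choose_eq_zero_of_lt ha2] at hpos ⊢
    interval_cases a <;> interval_cases β <;> nlinarith
  · obtain ⟨b, rfl⟩ := Nat.exists_eq_add_of_le' ha2
    have hchoose : (b + 2).choose 2 * 2 ≤ (b + 2) * (b + 1) :=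
      Nat.choose_two_right (b + 2) ▸ Nat.div_mul_le_self _ _
    have hβ : t * β ≤ t * (τ + 1) := Nat.mul_le_mul_left t hβτ
    nlinarith

theorem sparse_extendedClique (τ m : ℕ) : Sparse (τ + 1) (2 * τ + 1) (extendedClique τ m) := by
  intro W hW
  rw [spanCount_extendedClique] at hW ⊢
  have hdisj : Disjoint (range (2 * τ + 1) ∩ W) (Ico (2 * τ + 1) m ∩ W) :=
    disjoint_Ico_of_subset_range inter_subset_left |>.mono_right inter_subset_left
  have hW_card : #(range (2 * τ + 1) ∩ W) + #(Ico (2 * τ + 1) m ∩ W) ≤ #W := by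
    rw [← card_union_of_disjoint hdisj]
    exact card_le_card (union_subset inter_subset_right inter_subset_right)
  have hβa : #(range (τ + 1) ∩ W) ≤ #(range (2 * τ + 1) ∩ W) :=
    card_le_card (inter_subset_inter_right (range_subset_range.2 (by omega)))
  have hβτ : #(range (τ + 1) ∩ W) ≤ τ + 1 :=
    (card_le_card inter_subset_left).trans_eq (card_range _)
  have ha : #(range (2 * τ + 1) ∩ W) ≤ 2 * τ + 1 :=
    (card_le_card inter_subset_left).trans_eq (card_range _)
  exact (choose_two_add_mul_add_le ha hβτ hβa hW).trans (Nat.mul_le_mul_left _ hW_card)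

def IsUniformTight (s k l n : ℕ) (E : Multiset (Finset ℕ)) : Prop :=
  (∀ e ∈ E, e ⊆ range n) ∧ (∀ e ∈ E, #e = s) ∧ Sparse k l E ∧ Multiset.card E + l = k * n

theorem IsUniformTight.add {s k₁ l₁ k₂ l₂ n : ℕ} {E₁ E₂ : Multiset (Finset ℕ)}
    (h₁ : IsUniformTight s k₁ l₁ n E₁) (h₂ : IsUniformTight s k₂ l₂ n E₂)
    (hl₁ : l₁ ≤ k₁ * s) (hl₂ : l₂ ≤ k₂ * s) :
    IsUniformTight s (k₁ + k₂) (l₁ + l₂) n (E₁ + E₂) := by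
  obtain ⟨hV₁, hE₁, hsp₁, hc₁⟩ := h₁
  obtain ⟨hV₂, hE₂, hsp₂, hc₂⟩ := h₂
  refine ⟨fun e he => ?_, fun e he => ?_, hsp₁.add hsp₂ hE₁ hE₂ hl₁ hl₂, ?_⟩
  · exact (Multiset.mem_add.1 he).elim (hV₁ e) (hV₂ e)
  · exact (Multiset.mem_add.1 he).elim (hE₁ e) (hE₂ e)
  · rw [Multiset.card_add, add_mul]
    omega

theorem isUniformTight_sunflower {k x l c n : ℕ} (hl : l + x = k * c) (hcn : c < n) :
    IsUniformTight (c + 1) k l n (cone (Ico (n - c) n) (stars k x (n - c))) := by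
  have hm : 0 < n - c := by omega
  have hZ : #(Ico (n - c) n) = c := by rw [Nat.card_Ico]; omega
  refine ⟨subset_range_of_mem_cone (subset_range_of_mem_stars hm) (Nat.sub_le n c), ?_,
    sparse_cone_stars hm (by rwa [Nat.sub_sub_self hcn.le]), ?_⟩
  · intro e he
    rw [card_of_mem_cone card_of_mem_stars (disjoint_Ico_of_mem_stars hm) e he, hZ, add_comm]
  · rw [card_cone, card_stars, add_assoc, add_comm x, hl, ← mul_add, Nat.sub_add_cancel hcn.le]

theorem isUniformTight_cone_extendedClique {τ σ n : ℕ} (hn : 2 * τ + 1 + σ ≤ n) :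
    IsUniformTight (σ + 2) (τ + 1) (2 * τ + 1 + (τ + 1) * σ) n
      (cone (Ico (n - σ) n) (extendedClique τ (n - σ))) := by
  have hm : 2 * τ + 1 ≤ n - σ := by omega
  have hZ : #(Ico (n - σ) n) = σ := by rw [Nat.card_Ico]; omega
  have hdisj : ∀ e ∈ extendedClique τ (n - σ), Disjoint e (Ico (n - σ) n) := fun e he =>
    disjoint_Ico_of_subset_range (subset_range_of_mem_extendedClique hm e he)
  refine ⟨subset_range_of_mem_cone (subset_range_of_mem_extendedClique hm) (Nat.sub_le n σ), ?_,
    by simpa only [hZ] using (sparse_extendedClique τ (n - σ)).cone hdisj, ?_⟩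
  · intro e he
    rw [card_of_mem_cone card_of_mem_extendedClique hdisj e he, hZ, add_comm]
  · rw [card_cone, ← add_assoc, card_extendedClique hm, ← mul_add, Nat.sub_add_cancel (by omega)]

theorem exists_isUniformTight {k σ l n : ℕ} (hl : l + 1 ≤ (σ + 2) * k) (hn : 2 * k + σ + 2 ≤ n) :
    ∃ E, IsUniformTight (σ + 2) k l n E := by
  by_cases hlk : l ≤ k * (σ + 1)
  · exact ⟨_, isUniformTight_sunflower (Nat.add_sub_cancel' hlk) (by omega)⟩
  obtain ⟨τ, rfl⟩ := Nat.exists_eq_add_of_le (not_le.1 hlk).le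
  have hτk : τ + 1 ≤ k := by nlinarith
  obtain ⟨κ, rfl⟩ := Nat.exists_eq_add_of_le hτk
  rw [show (τ + 1 + κ) * (σ + 1) + τ = 2 * τ + 1 + (τ + 1) * σ + κ * (σ + 1) by ring]
  exact ⟨_, (isUniformTight_cone_extendedClique (by omega)).add
    (isUniformTight_sunflower (x := 0) rfl (by omega)) (by nlinarith) (by nlinarith)⟩

theorem IsUniformTight.exists_fin {s k l n : ℕ} {E₀ : Multiset (Finset ℕ)}
    (h : IsUniformTight s k l n E₀) : ∃ E : Multiset (Finset (Fin n)),
      (∀ e ∈ E, #e = s) ∧ Sparse k l E ∧ Multiset.card E + l = k * n := by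
  obtain ⟨hV, hE, hsp, hc⟩ := h
  lift E₀ to Multiset (Finset (Fin n)) using fun e he x hx => mem_range.1 (hV e he hx)
  refine ⟨E₀, fun e he => ?_, hsp.of_map_image Fin.val_injective, by simpa using hc⟩
  simpa [card_image_of_injective _ Fin.val_injective] using hE _ (Multiset.mem_map_of_mem _ he)

theorem stmt_4_general (k s l : ℕ) (hs : 2 ≤ s) (hl : l + 1 ≤ s * k) :
    ∃ n₁ : ℕ, ∀ n ≥ n₁, ∃ E : Multiset (Finset (Fin n)),
      (∀ e ∈ E, e.card = s) ∧ Sparse k l E ∧ Multiset.card E + l = k * n := by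
  obtain ⟨σ, rfl⟩ : ∃ σ, s = σ + 2 := ⟨s - 2, by omega⟩
  refine ⟨2 * k + σ + 2, fun n hn => ?_⟩
  obtain ⟨E, hE⟩ := exists_isUniformTight hl hn
  exact hE.exists_fin

/-- For `k ≥ 1`, `s ≥ 2` and `0 ≤ ℓ ≤ s·k - 1`, there is an `n₁` such that for every
`n ≥ n₁` there exists an `s`-uniform `(k,ℓ)`-tight hypergraph on `n` vertices. -/
theorem stmt_4 (k s l : ℕ) (hk : 1 ≤ k) (hs : 2 ≤ s) (hl : l + 1 ≤ s * k) :
    ∃ n₁ : ℕ, ∀ n ≥ n₁, ∃ E : Multiset (Finset (Fin n)),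
      (∀ e ∈ E, e.card = s) ∧ Sparse k l E ∧ Multiset.card E + l = k * n :=
  stmt_4_general k s l hs hl
end

section
/- Let k ≥ 1, s ≥ 1 and 0 ≤ ℓ ≤ s·k − 1 be integers, and let G = (V,E) be a (k,ℓ)-sparse hypergraph in which every edge has at least s vertices. If C₁ and C₂ are distinct components of G, then the multisets E(C₁) and E(C₂) are disjoint (no edge of E lies in both spans) and |C₁ ∩ C₂| < s. -/
/-- A block of a sparse hypergraph: a vertex subset spanning at least one edge and
spanning exactly `k|W| - ℓ` edges. -/
def IsBlock {V : Type*} [DecidableEq V] (k l : ℕ) (E : Multiset (Finset V)) (W : Finset V) :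
    Prop :=
  1 ≤ spanCount E W ∧ spanCount E W + l = k * W.card

/-- A component: an inclusion-maximal block. -/
def IsComponent {V : Type*} [DecidableEq V] (k l : ℕ) (E : Multiset (Finset V))
    (W : Finset V) : Prop :=
  IsBlock k l E W ∧ ∀ W' : Finset V, IsBlock k l E W' → W ⊆ W' → W' = W

/-!
Edge counts are supermodular: `i(A) + i(B) ≤ i(A ∪ B) + i(A ∩ B)`. For two blocks `A`, `B`
this gives `k|A ∪ B| - ℓ + (k|A ∩ B| - ℓ) ≤ i(A ∪ B) + i(A ∩ B)`. If `A ∩ B` spans an edge,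
sparsity bounds both terms on the right, so `A ∪ B` is a block and maximality forces two
components sharing an edge to coincide. Otherwise `i(A ∩ B) = 0` and sparsity of `A ∪ B`
leaves `k|A ∩ B| ≤ ℓ < s k`, i.e. `|A ∩ B| < s`.
-/

section SpanCount

variable {V : Type*} [DecidableEq V] (E : Multiset (Finset V))

lemma spanCount_mono {A B : Finset V} (h : A ⊆ B) : spanCount E A ≤ spanCount E B :=
  Multiset.card_le_card <| Multiset.monotone_filter_right E fun _ he => he.trans h

lemma spanCount_add_le_union_add_inter (A B : Finset V) :
    spanCount E A + spanCount E B ≤ spanCount E (A ∪ B) + spanCount E (A ∩ B) := by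
  unfold spanCount
  rw [← Multiset.card_add, ← Multiset.card_add, Multiset.filter_add_filter]
  refine Multiset.card_le_card (add_le_add ?_ ?_) <;> apply Multiset.monotone_filter_right
  · rintro e (h | h)
    · exact h.trans Finset.subset_union_left
    · exact h.trans Finset.subset_union_right
  · exact fun e he => Finset.subset_inter he.1 he.2

lemma spanCount_pos_iff {W : Finset V} : 1 ≤ spanCount E W ↔ ∃ e ∈ E, e ⊆ W := by
  simp [spanCount, Nat.one_le_iff_ne_zero, Multiset.filter_eq_nil]

end SpanCount

section Blocks

variable {V : Type*} [DecidableEq V] {k l : ℕ} {E : Multiset (Finset V)} {A B : Finset V}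

lemma IsBlock.mul_card_union_add_mul_card_inter_le (hA : IsBlock k l E A)
    (hB : IsBlock k l E B) :
    k * (A ∪ B).card + k * (A ∩ B).card ≤ spanCount E (A ∪ B) + spanCount E (A ∩ B) + 2 * l := by
  rw [← Nat.mul_add, Finset.card_union_add_card_inter, Nat.mul_add, ← hA.2, ← hB.2]
  have := spanCount_add_le_union_add_inter E A B
  omega

lemma IsBlock.union (hsp : Sparse k l E) (hA : IsBlock k l E A) (hB : IsBlock k l E B)
    (hAB : 1 ≤ spanCount E (A ∩ B)) : IsBlock k l E (A ∪ B) := by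
  have hU : 1 ≤ spanCount E (A ∪ B) := hA.1.trans (spanCount_mono E Finset.subset_union_left)
  have := hA.mul_card_union_add_mul_card_inter_le hB
  have := hsp (A ∪ B) hU
  have := hsp (A ∩ B) hAB
  exact ⟨hU, by omega⟩

lemma IsBlock.mul_card_inter_le (hsp : Sparse k l E) (hA : IsBlock k l E A)
    (hB : IsBlock k l E B) (hAB : spanCount E (A ∩ B) = 0) : k * (A ∩ B).card ≤ l := by
  have := hA.mul_card_union_add_mul_card_inter_le hB
  have := hsp (A ∪ B) (hA.1.trans (spanCount_mono E Finset.subset_union_left))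
  omega

lemma IsComponent.eq_of_spanCount_inter_pos (hsp : Sparse k l E) (hA : IsComponent k l E A)
    (hB : IsComponent k l E B) (hAB : 1 ≤ spanCount E (A ∩ B)) : A = B := by
  have hU := hA.1.union hsp hB.1 hAB
  exact (hA.2 _ hU Finset.subset_union_left).symm.trans (hB.2 _ hU Finset.subset_union_right)

end Blocks

theorem stmt_6_general {V : Type*} [DecidableEq V] (k s l : ℕ)
    (hl : l + 1 ≤ s * k) (E : Multiset (Finset V))
    (hsp : Sparse k l E) (C₁ C₂ : Finset V)
    (hC₁ : IsComponent k l E C₁) (hC₂ : IsComponent k l E C₂) (hne : C₁ ≠ C₂) :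
    (∀ e ∈ E, e ⊆ C₁ → ¬ e ⊆ C₂) ∧ (C₁ ∩ C₂).card < s := by
  have hinter : spanCount E (C₁ ∩ C₂) = 0 := by
    by_contra h
    exact hne (hC₁.eq_of_spanCount_inter_pos hsp hC₂ (Nat.one_le_iff_ne_zero.2 h))
  refine ⟨fun e he h₁ h₂ => ?_, ?_⟩
  · have := (spanCount_pos_iff E).2 ⟨e, he, Finset.subset_inter h₁ h₂⟩
    omega
  · have hle := hC₁.1.mul_card_inter_le hsp hC₂.1 hinter
    exact Nat.lt_of_mul_lt_mul_right (a := k) (by rw [Nat.mul_comm]; omega)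

/-- Disjointness of components: with `0 ≤ ℓ ≤ s·k - 1` and all edges of size at least `s`,
distinct components of a `(k,ℓ)`-sparse hypergraph have disjoint edge spans and intersect
in fewer than `s` vertices. -/
theorem stmt_6 {V : Type*} [DecidableEq V] (k s l : ℕ) (hk : 1 ≤ k) (hs : 1 ≤ s)
    (hl : l + 1 ≤ s * k) (E : Multiset (Finset V)) (hcard : ∀ e ∈ E, s ≤ e.card)
    (hsp : Sparse k l E) (C₁ C₂ : Finset V)
    (hC₁ : IsComponent k l E C₁) (hC₂ : IsComponent k l E C₂) (hne : C₁ ≠ C₂) :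
    (∀ e ∈ E, e ⊆ C₁ → ¬ e ⊆ C₂) ∧ (C₁ ∩ C₂).card < s :=
  stmt_6_general k s l hl E hsp C₁ C₂ hC₁ hC₂ hne
end

section
/- Let k ≥ 1 and 0 ≤ ℓ ≤ k be integers and let G = (V,E) be a (k,ℓ)-sparse hypergraph. Then the components of G are pairwise vertex-disjoint: if C₁ and C₂ are distinct components of G, then C₁ ∩ C₂ = ∅. -/
/-!
The edge count is supermodular: an edge spanned by `C₁` or by `C₂` is spanned by `C₁ ∪ C₂`,
and one spanned by both is spanned by `C₁ ∩ C₂`. If two blocks meet, sparsity bounds the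
intersection by `k|C₁ ∩ C₂| - ℓ` (for an intersection spanning no edge this is where `ℓ ≤ k`
enters), so the union spans at least `k|C₁ ∪ C₂| - ℓ` edges and is a block. By maximality both
components equal their union.
-/

section Hypergraph

variable {V : Type*} [DecidableEq V] {k l : ℕ} {E : Multiset (Finset V)} {s t : Finset V}

theorem spanCount_mono_s7 (h : s ⊆ t) : spanCount E s ≤ spanCount E t :=
  Multiset.card_le_card (Multiset.monotone_filter_right E fun _ he => he.trans h)

theorem spanCount_add_spanCount_le (E : Multiset (Finset V)) (s t : Finset V) :
    spanCount E s + spanCount E t ≤ spanCount E (s ∪ t) + spanCount E (s ∩ t) := by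
  unfold spanCount
  rw [← Multiset.card_add, ← Multiset.card_add, Multiset.filter_add_filter, Multiset.card_add,
    Multiset.card_add]
  refine Nat.add_le_add (Multiset.card_le_card ?_) (Multiset.card_le_card ?_)
  · exact Multiset.monotone_filter_right E fun e he =>
      he.elim (·.trans Finset.subset_union_left) (·.trans Finset.subset_union_right)
  · exact Multiset.monotone_filter_right E fun e he => Finset.subset_inter he.1 he.2

theorem Sparse.add_le_of_nonempty (hsp : Sparse k l E) (hl : l ≤ k) (hs : s.Nonempty) :
    spanCount E s + l ≤ k * s.card := by
  rcases Nat.eq_zero_or_pos (spanCount E s) with h0 | hpos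
  · rw [h0, zero_add]
    exact hl.trans (Nat.le_mul_of_pos_right k (Finset.card_pos.mpr hs))
  · exact hsp s hpos

theorem IsBlock.union_s7 (hsp : Sparse k l E) (hl : l ≤ k) (hs : IsBlock k l E s)
    (ht : IsBlock k l E t) (hst : (s ∩ t).Nonempty) : IsBlock k l E (s ∪ t) := by
  have hspan : 1 ≤ spanCount E (s ∪ t) := hs.1.trans (spanCount_mono_s7 Finset.subset_union_left)
  refine ⟨hspan, le_antisymm (hsp _ hspan) ?_⟩
  have hinter := hsp.add_le_of_nonempty hl hst
  have hsuper := spanCount_add_spanCount_le E s t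
  have hcard : k * (s ∪ t).card + k * (s ∩ t).card = k * s.card + k * t.card := by
    rw [← mul_add, Finset.card_union_add_card_inter, mul_add]
  have hs_tight := hs.2
  have ht_tight := ht.2
  omega

end Hypergraph

theorem stmt_7_general {V : Type*} [DecidableEq V] (k l : ℕ) (hl : l ≤ k)
    (E : Multiset (Finset V)) (hsp : Sparse k l E)
    (C₁ C₂ : Finset V) (hC₁ : IsComponent k l E C₁) (hC₂ : IsComponent k l E C₂)
    (hdistinct : C₁ ≠ C₂) :
    C₁ ∩ C₂ = ∅ := by
  by_contra hmeet
  have hunion := hC₁.1.union_s7 hsp hl hC₂.1 (Finset.nonempty_iff_ne_empty.mpr hmeet)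
  have h₁ := hC₁.2 _ hunion Finset.subset_union_left
  have h₂ := hC₂.2 _ hunion Finset.subset_union_right
  exact hdistinct (h₁.symm.trans h₂)

/-- If `0 ≤ ℓ ≤ k`, the components of a `(k,ℓ)`-sparse hypergraph are pairwise
vertex-disjoint. -/
theorem stmt_7 {V : Type*} [DecidableEq V] (k l : ℕ) (hk : 1 ≤ k) (hl : l ≤ k)
    (E : Multiset (Finset V)) (hne : ∀ e ∈ E, e.Nonempty) (hsp : Sparse k l E)
    (C₁ C₂ : Finset V) (hC₁ : IsComponent k l E C₁) (hC₂ : IsComponent k l E C₂)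
    (hdistinct : C₁ ≠ C₂) :
    C₁ ∩ C₂ = ∅ :=
  stmt_7_general k l hl E hsp C₁ C₂ hC₁ hC₂ hdistinct
end

section
/- Let k ≥ 1 be an integer. A hypergraph G = (V,E) is a k-map if and only if G is (k,0)-tight. -/
/-- A hypergraph on the finite vertex type `V` is `(k,ℓ)`-tight if it is `(k,ℓ)`-sparse
and has exactly `k|V| - ℓ` edges. -/
def Tight {V : Type*} [Fintype V] [DecidableEq V] (k l : ℕ) (E : Multiset (Finset V)) : Prop :=
  Sparse k l E ∧ Multiset.card E + l = k * Fintype.card V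

/-- A map: a hypergraph admitting an orientation (a tail `f v ∈ f v` for each vertex `v`)
whose tail assignment is a bijection from the edge multiset onto the vertex set; i.e.
the edge multiset is exactly the multiset of the edges `f v` over all `v ∈ V`, with
`v ∈ f v` for all `v`. -/
def IsMap {V : Type*} [Fintype V] [DecidableEq V] (E : Multiset (Finset V)) : Prop :=
  ∃ f : V → Finset V, (∀ v, v ∈ f v) ∧ E = Multiset.map f Finset.univ.val

/-- A `k`-map: a hypergraph whose edge multiset partitions into `k` maps. -/
def IsKMap {V : Type*} [Fintype V] [DecidableEq V] (k : ℕ)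
    (E : Multiset (Finset V)) : Prop :=
  ∃ g : Fin k → Multiset (Finset V), (∑ i, g i) = E ∧ ∀ i, IsMap (g i)

open Finset

section

variable {V : Type*} [DecidableEq V]

theorem spanCount_sum {ι : Type*} (s : Finset ι) (g : ι → Multiset (Finset V)) (W : Finset V) :
    spanCount (∑ i ∈ s, g i) W = ∑ i ∈ s, spanCount (g i) W := by
  simp only [spanCount, ← Multiset.countP_eq_card_filter]
  exact map_sum (Multiset.countPAddMonoidHom _) g s

variable [Fintype V]

theorem IsMap.card_eq {E : Multiset (Finset V)} (hE : IsMap E) :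
    Multiset.card E = Fintype.card V := by
  obtain ⟨f, -, rfl⟩ := hE
  rw [Multiset.card_map]
  rfl

theorem IsMap.spanCount_le {E : Multiset (Finset V)} (hE : IsMap E) (W : Finset V) :
    spanCount E W ≤ W.card := by
  obtain ⟨f, hf, rfl⟩ := hE
  rw [spanCount, Multiset.filter_map, Multiset.card_map, ← filter_val, ← card_def]
  exact card_le_card fun v hv => (mem_filter.1 hv).2 (hf v)

theorem IsKMap.tight {k : ℕ} {E : Multiset (Finset V)} (hE : IsKMap k E) : Tight k 0 E := by
  obtain ⟨g, rfl, hg⟩ := hE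
  refine ⟨fun W _ => ?_, ?_⟩
  · calc spanCount (∑ i, g i) W + 0 = ∑ i, spanCount (g i) W := spanCount_sum _ _ _
      _ ≤ ∑ _i : Fin k, W.card := sum_le_sum fun i _ => (hg i).spanCount_le W
      _ = k * W.card := by simp
  · rw [add_zero, Multiset.card_sum, sum_congr rfl fun i _ => (hg i).card_eq]
    simp

end

theorem Finset.val_map_eq_sum_singleton {α β : Type*} (s : Finset α) (f : α → β) :
    s.val.map f = ∑ a ∈ s, {f a} := by
  rw [← Multiset.sum_map_singleton (s.val.map f), Multiset.map_map]
  rfl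

theorem Multiset.map_univ_prod {α β γ : Type*} [Fintype α] [Fintype β] (f : α × β → γ) :
    (univ : Finset (α × β)).val.map f = ∑ a, (univ : Finset β).val.map fun b => f (a, b) := by
  simp only [val_map_eq_sum_singleton, Fintype.sum_prod_type]

section

variable {V ι : Type*} [DecidableEq V] [Fintype ι] {k : ℕ}

theorem Sparse.card_le_mul_card_biUnion {c : ι → Finset V} (hc : Sparse k 0 (univ.val.map c))
    (s : Finset ι) : s.card ≤ k * (s.biUnion c).card := by
  rcases s.eq_empty_or_nonempty with rfl | hs
  · simp
  have hspan : s.card ≤ spanCount (univ.val.map c) (s.biUnion c) := by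
    rw [spanCount, Multiset.filter_map, Multiset.card_map, ← filter_val, ← card_def]
    exact card_le_card fun j hj => mem_filter.2 ⟨mem_univ j, subset_biUnion_of_mem c hj⟩
  simpa using hspan.trans (hc _ (hs.card_pos.trans_le hspan))

theorem isKMap_of_equiv [Fintype V] (c : ι → Finset V) (e : ι ≃ Fin k × V)
    (he : ∀ j, (e j).2 ∈ c j) :
    IsKMap k (univ.val.map c) := by
  refine ⟨fun i => univ.val.map fun v => c (e.symm (i, v)), ?_, fun i => ?_⟩
  · refine (Multiset.map_univ_prod (c ∘ e.symm)).symm.trans ?_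
    rw [← Multiset.map_map, Multiset.map_univ_val_equiv]
  · refine ⟨fun v => c (e.symm (i, v)), fun v => ?_, rfl⟩
    simpa using he (e.symm (i, v))

theorem Tight.isKMap_of_indexed [Fintype V] {c : ι → Finset V}
    (hc : Tight k 0 (univ.val.map c)) : IsKMap k (univ.val.map c) := by
  classical
  obtain ⟨hsparse, hcard⟩ := hc
  let t : ι → Finset (Fin k × V) := fun j => univ ×ˢ c j
  have hall (s : Finset ι) : s.card ≤ (s.biUnion t).card := by
    have hunion : s.biUnion t = univ ×ˢ s.biUnion c := by
      ext ⟨i, v⟩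
      simp [t]
    rw [hunion, card_product, card_univ, Fintype.card_fin]
    exact hsparse.card_le_mul_card_biUnion s
  obtain ⟨m, hinj, hm⟩ := (all_card_le_biUnion_card_iff_exists_injective t).1 hall
  have hbij : Function.Bijective m := by
    refine (Fintype.bijective_iff_injective_and_card m).2 ⟨hinj, ?_⟩
    simpa using hcard
  exact isKMap_of_equiv c (Equiv.ofBijective m hbij) fun j => (mem_product.1 (hm j)).2

theorem Tight.isKMap [Fintype V] {E : Multiset (Finset V)} (hE : Tight k 0 E) : IsKMap k E := by
  rw [← Multiset.map_univ_coe E] at hE ⊢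
  exact hE.isKMap_of_indexed

end

theorem stmt_10_general {V : Type*} [Fintype V] [DecidableEq V] (k : ℕ)
    (E : Multiset (Finset V)) :
    IsKMap k E ↔ Tight k 0 E :=
  ⟨IsKMap.tight, Tight.isKMap⟩

/-- Generalized Nash-Williams–Tutte: a hypergraph is a `k`-map iff it is `(k,0)`-tight. -/
theorem stmt_10 {V : Type*} [Fintype V] [DecidableEq V] (k : ℕ) (hk : 1 ≤ k)
    (E : Multiset (Finset V)) (hne : ∀ e ∈ E, e.Nonempty) :
    IsKMap k E ↔ Tight k 0 E :=
  stmt_10_general k E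
end

section
/- Let k and ℓ be integers with 0 ≤ ℓ ≤ k, and let G = (V,E) be a (k,ℓ)-tight hypergraph. Then the multiset E can be partitioned into ℓ parts T₁,…,T_ℓ and k − ℓ parts M₁,…,M_{k−ℓ} such that each (V, Tᵢ) is a (1,1)-tight hypergraph on V (a spanning tree) and each (V, Mⱼ) is a (1,0)-tight hypergraph on V (a spanning map); i.e., G is the edge-disjoint union of an ℓ-arborescence and a (k−ℓ)-map. -/
namespace MT

variable {V : Type*} [DecidableEq V]

lemma spanCount_mono {E E' : Multiset (Finset V)} (h : E' ≤ E) (W : Finset V) :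
    spanCount E' W ≤ spanCount E W :=
  Multiset.card_le_card (Multiset.filter_le_filter _ h)

lemma spanCount_mono_subset (E : Multiset (Finset V)) {A B : Finset V} (h : A ⊆ B) :
    spanCount E A ≤ spanCount E B :=
  Multiset.card_le_card (Multiset.monotone_filter_right E (fun e he => he.trans h))

lemma spanCount_cons (a : Finset V) (s : Multiset (Finset V)) (W : Finset V) :
    spanCount (a ::ₘ s) W = (if a ⊆ W then 1 else 0) + spanCount s W := by
  simp only [spanCount, Multiset.filter_cons, Multiset.card_add]
  congr 1
  split <;> simp

lemma spanCount_supermod (E : Multiset (Finset V)) (A B : Finset V) :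
    spanCount E A + spanCount E B ≤ spanCount E (A ∪ B) + spanCount E (A ∩ B) := by
  classical
  have h := Multiset.filter_add_filter (fun e => e ⊆ A) (fun e => e ⊆ B) E
  have hcard := congrArg Multiset.card h
  simp only [Multiset.card_add] at hcard
  have h1 : Multiset.card (Multiset.filter (fun e => e ⊆ A ∨ e ⊆ B) E)
      ≤ spanCount E (A ∪ B) := by
    apply Multiset.card_le_card
    apply Multiset.monotone_filter_right
    intro e he
    rcases he with h' | h'
    · exact h'.trans Finset.subset_union_left
    · exact h'.trans Finset.subset_union_right
  have h2 : Multiset.card (Multiset.filter (fun e => e ⊆ A ∧ e ⊆ B) E)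
      = spanCount E (A ∩ B) := by
    unfold spanCount
    congr 1
    apply Multiset.filter_congr
    intro e _
    exact (Finset.subset_inter_iff).symm
  unfold spanCount at *
  omega

/-- A tight set for the invariant data `(K, L, E', S)`. -/
def TightSet (K L : ℕ) (E' : Multiset (Finset V)) (S W : Finset V) : Prop :=
  1 ≤ spanCount E' W ∧ spanCount E' W + L = K * W.card + (W \ S).card

/-- The partial-stage sparsity invariant. -/
def Inv4 (K L : ℕ) (E' : Multiset (Finset V)) (S : Finset V) : Prop :=
  ∀ W : Finset V, 1 ≤ spanCount E' W →
    spanCount E' W + L ≤ K * W.card + (W \ S).card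

lemma tight_uncross {K L : ℕ} (hKL : L ≤ K) {E' : Multiset (Finset V)} {S : Finset V}
    (hInv : Inv4 K L E' S) {A B : Finset V} {v : V}
    (hv : v ∉ S) (hvA : v ∈ A) (hvB : v ∈ B)
    (hA : TightSet K L E' S A) (hB : TightSet K L E' S B) :
    TightSet K L E' S (A ∩ B) ∧ TightSet K L E' S (A ∪ B) := by
  obtain ⟨hA1, hA2⟩ := hA
  obtain ⟨hB1, hB2⟩ := hB
  have hsup := spanCount_supermod E' A B
  have hcardm : A.card + B.card = (A ∪ B).card + (A ∩ B).card :=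
    (Finset.card_union_add_card_inter A B).symm
  have e1 : (A ∪ B) \ S = (A \ S) ∪ (B \ S) := by
    ext x; simp only [Finset.mem_sdiff, Finset.mem_union]; tauto
  have e2 : (A ∩ B) \ S = (A \ S) ∩ (B \ S) := by
    ext x; simp only [Finset.mem_sdiff, Finset.mem_inter]; tauto
  have hsd : (A \ S).card + (B \ S).card = ((A ∪ B) \ S).card + ((A ∩ B) \ S).card := by
    rw [e1, e2]
    exact (Finset.card_union_add_card_inter _ _).symm
  -- lower bound on the RHS target for the intersection
  have hvAB : v ∈ A ∩ B := Finset.mem_inter.2 ⟨hvA, hvB⟩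
  have hKle : K * 1 ≤ K * (A ∩ B).card :=
    Nat.mul_le_mul_left K (Finset.card_pos.2 ⟨v, hvAB⟩)
  have hsdv : 1 ≤ ((A ∩ B) \ S).card :=
    Finset.card_pos.2 ⟨v, Finset.mem_sdiff.2 ⟨hvAB, hv⟩⟩
  have hU1 : 1 ≤ spanCount E' (A ∪ B) :=
    le_trans hA1 (spanCount_mono_subset E' Finset.subset_union_left)
  have hUinv := hInv _ hU1
  have hmul : K * A.card + K * B.card = K * (A ∪ B).card + K * (A ∩ B).card := by
    rw [← Nat.mul_add, ← Nat.mul_add, hcardm]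
  have hI1 : 1 ≤ spanCount E' (A ∩ B) := by omega
  have hIinv := hInv _ hI1
  constructor
  · exact ⟨hI1, by omega⟩
  · exact ⟨hU1, by omega⟩

lemma exists_least_tight [Fintype V] {K L : ℕ} (hKL : L ≤ K) {E' : Multiset (Finset V)}
    {S : Finset V} (hInv : Inv4 K L E' S) {v : V} (hv : v ∉ S)
    (hex : ∃ W, TightSet K L E' S W ∧ v ∈ W) :
    ∃ m, TightSet K L E' S m ∧ v ∈ m ∧ ∀ W, TightSet K L E' S W → v ∈ W → m ⊆ W := by
  classical
  set C : Finset (Finset V) :=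
    Finset.univ.filter (fun W => TightSet K L E' S W ∧ v ∈ W) with hC
  have hCne : C.Nonempty := by
    obtain ⟨W, hW, hvW⟩ := hex
    exact ⟨W, by simp [hC, hW, hvW]⟩
  obtain ⟨m, hmC, hmin⟩ := C.exists_min_image Finset.card hCne
  simp only [hC, Finset.mem_filter, Finset.mem_univ, true_and] at hmC
  refine ⟨m, hmC.1, hmC.2, ?_⟩
  intro W hW hvW
  have huncross := tight_uncross hKL hInv hv hmC.2 hvW hmC.1 hW
  have hmem : m ∩ W ∈ C := by
    simp [hC, huncross.1, Finset.mem_inter.2 ⟨hmC.2, hvW⟩]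
  have hle := hmin _ hmem
  have : m ∩ W = m :=
    Finset.eq_of_subset_of_card_le Finset.inter_subset_left hle
  intro x hx
  have : x ∈ m ∩ W := this.symm ▸ hx
  exact (Finset.mem_inter.1 this).2

lemma tight_meets {K L : ℕ} {E E' : Multiset (Finset V)} {S : Finset V}
    (hE'le : E' ≤ E) (hE : Sparse (K + 1) (L + 1) E) {W : Finset V}
    (hW : TightSet K L E' S W) : (W ∩ S).Nonempty := by
  by_contra hcon
  rw [Finset.not_nonempty_iff_eq_empty] at hcon
  have hWS : W \ S = W := by
    ext x
    simp only [Finset.mem_sdiff]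
    refine ⟨fun h => h.1, fun h => ⟨h, fun hxS => ?_⟩⟩
    have : x ∈ W ∩ S := Finset.mem_inter.2 ⟨h, hxS⟩
    simp [hcon] at this
  obtain ⟨h1, h2⟩ := hW
  have hmono := spanCount_mono hE'le W
  have hsp := hE W (le_trans h1 hmono)
  rw [hWS] at h2
  have : (K + 1) * W.card = K * W.card + W.card := by ring
  omega

lemma crossing_in_least [Fintype V] {K L : ℕ} (hKL : L ≤ K) {E E' : Multiset (Finset V)}
    {S : Finset V} (hE'le : E' ≤ E) (hE : Sparse (K + 1) (L + 1) E)
    (hInv : Inv4 K L E' S) {m : Finset V} {v : V}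
    (hm : TightSet K L E' S m) (hvm : v ∈ m) (hv : v ∉ S)
    (hleast : ∀ W, TightSet K L E' S W → v ∈ W → m ⊆ W) :
    ∃ g ∈ E', g ⊆ m ∧ (∃ u ∈ g, u ∉ S) ∧ (∃ w ∈ g, w ∈ S) := by
  classical
  set A := E'.filter (fun e => e ⊆ m) with hA
  have hAcard : Multiset.card A = spanCount E' m := rfl
  -- split A by ⊆ m ∩ S
  have hs1 : Multiset.card A = Multiset.card (A.filter (fun e => e ⊆ m ∩ S))
      + Multiset.card (A.filter (fun e => ¬ e ⊆ m ∩ S)) := by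
    rw [← Multiset.card_add, Multiset.filter_add_not]
  set A1 := A.filter (fun e => ¬ e ⊆ m ∩ S) with hA1
  have hs2 : Multiset.card A1 = Multiset.card (A1.filter (fun e => e ⊆ m \ S))
      + Multiset.card (A1.filter (fun e => ¬ e ⊆ m \ S)) := by
    rw [← Multiset.card_add, Multiset.filter_add_not]
  set X := A1.filter (fun e => ¬ e ⊆ m \ S) with hX
  -- bounds
  have hb1 : Multiset.card (A.filter (fun e => e ⊆ m ∩ S)) ≤ spanCount E' (m ∩ S) := by
    apply Multiset.card_le_card
    apply Multiset.filter_le_filter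
    exact Multiset.filter_le _ _
  have hb2 : Multiset.card (A1.filter (fun e => e ⊆ m \ S)) ≤ spanCount E' (m \ S) := by
    apply Multiset.card_le_card
    rw [Multiset.le_filter]
    constructor
    · calc A1.filter (fun e => e ⊆ m \ S) ≤ A1 := Multiset.filter_le _ _
        _ ≤ A := Multiset.filter_le _ _
        _ ≤ E' := Multiset.filter_le _ _
    · intro e he
      exact (Multiset.mem_filter.1 he).2
  -- the bound on edges inside m ∩ S
  have hmS : (m ∩ S).Nonempty := tight_meets hE'le hE hm
  have hc1 : spanCount E' (m ∩ S) + L ≤ K * (m ∩ S).card := by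
    have hKle : K * 1 ≤ K * (m ∩ S).card := Nat.mul_le_mul_left K (Finset.card_pos.2 hmS)
    rcases Nat.eq_zero_or_pos (spanCount E' (m ∩ S)) with h0 | hpos
    · omega
    · have := hInv _ hpos
      have hempty : (m ∩ S) \ S = ∅ := by
        ext x; simp only [Finset.mem_sdiff, Finset.mem_inter, Finset.notMem_empty]; tauto
      rw [hempty] at this
      simpa using this
  -- the strict bound on edges inside m \ S
  have hvmS : v ∈ m \ S := Finset.mem_sdiff.2 ⟨hvm, hv⟩
  have hmSne : 1 ≤ (m \ S).card := Finset.card_pos.2 ⟨v, hvmS⟩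
  have hc2 : spanCount E' (m \ S) + L + 1 ≤ K * (m \ S).card + (m \ S).card := by
    have hKle : K * 1 ≤ K * (m \ S).card := Nat.mul_le_mul_left K hmSne
    rcases Nat.eq_zero_or_pos (spanCount E' (m \ S)) with h0 | hpos
    · omega
    · have hle := hInv _ hpos
      have hidem : (m \ S) \ S = m \ S := by
        ext x; simp only [Finset.mem_sdiff]; tauto
      rw [hidem] at hle
      rcases Nat.lt_or_ge (spanCount E' (m \ S) + L) (K * (m \ S).card + (m \ S).card)
        with hlt | hge
      · omega
      · exfalso
        have heq : TightSet K L E' S (m \ S) := ⟨hpos, by rw [hidem]; omega⟩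
        have hsub := hleast _ heq hvmS
        obtain ⟨w, hw⟩ := hmS
        have hwS := (Finset.mem_inter.1 hw).2
        have := hsub (Finset.mem_inter.1 hw).1
        exact (Finset.mem_sdiff.1 this).2 hwS
  -- now the count of "crossing" edges in m is positive
  have hcardsplit : m.card = (m ∩ S).card + (m \ S).card :=
    (Finset.card_inter_add_card_sdiff m S).symm
  have hmul : K * m.card = K * (m ∩ S).card + K * (m \ S).card := by
    rw [hcardsplit]; ring
  have hXpos : 1 ≤ Multiset.card X := by
    have htight := hm.2
    omega
  obtain ⟨g, hg⟩ := Multiset.card_pos_iff_exists_mem.1 hXpos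
  have hg1 := Multiset.mem_filter.1 hg
  have hg2 := Multiset.mem_filter.1 hg1.1
  have hg3 := Multiset.mem_filter.1 hg2.1
  refine ⟨g, hg3.1, hg3.2, ?_, ?_⟩
  · obtain ⟨u, hu, hu2⟩ := Finset.not_subset.1 hg2.2
    exact ⟨u, hu, fun huS => hu2 (Finset.mem_inter.2 ⟨hg3.2 hu, huS⟩)⟩
  · obtain ⟨w, hw, hw2⟩ := Finset.not_subset.1 hg1.2
    refine ⟨w, hw, ?_⟩
    by_contra hwS
    exact hw2 (Finset.mem_sdiff.2 ⟨hg3.2 hw, hwS⟩)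

lemma aux_descend [Fintype V] {K L : ℕ} (hKL : L ≤ K) {E E' : Multiset (Finset V)}
    {S : Finset V} (hE'le : E' ≤ E) (hE : Sparse (K + 1) (L + 1) E)
    (hInv : Inv4 K L E' S) :
    ∀ n (m : Finset V) (v : V), m.card ≤ n → TightSet K L E' S m → v ∈ m → v ∉ S →
    (∀ W, TightSet K L E' S W → v ∈ W → m ⊆ W) →
    ∃ u g, u ∉ S ∧ g ∈ E' ∧ u ∈ g ∧ (∃ w ∈ g, w ∈ S) ∧
      (∀ W, TightSet K L E' S W → u ∈ W → g ⊆ W) := by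
  intro n
  induction n with
  | zero =>
    intro m v hn hm hvm _ _
    exact absurd (Finset.card_pos.2 ⟨v, hvm⟩) (by omega)
  | succ n ih =>
    intro m v hn hm hvm hv hleast
    obtain ⟨g, hgE', hgm, ⟨u, hug, huS⟩, hwS⟩ :=
      crossing_in_least hKL hE'le hE hInv hm hvm hv hleast
    have hum : u ∈ m := hgm hug
    have hexu : ∃ W, TightSet K L E' S W ∧ u ∈ W := ⟨m, hm, hum⟩
    obtain ⟨m', hm', hum', hleast'⟩ := exists_least_tight hKL hInv huS hexu
    by_cases hgm' : g ⊆ m'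
    · exact ⟨u, g, huS, hgE', hug, hwS, fun W hW huW => hgm'.trans (hleast' W hW huW)⟩
    · have hsub : m' ⊆ m := hleast' m hm hum
      have hne : m' ≠ m := fun h => hgm' (h ▸ hgm)
      have hcard : m'.card ≤ n := by
        have := Finset.card_lt_card (lt_of_le_of_ne hsub hne)
        omega
      exact ih m' u hcard hm' hum' huS hleast'

lemma step_exists [Fintype V] {K L : ℕ} (hKL : L ≤ K) {E E' : Multiset (Finset V)}
    {S : Finset V} (hE'le : E' ≤ E) (hE : Sparse (K + 1) (L + 1) E)
    (hInv : Inv4 K L E' S)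
    (hcount : Multiset.card E' + L + S.card = (K + 1) * Fintype.card V)
    (hSne : S.Nonempty) (hScne : Sᶜ.Nonempty) :
    ∃ v e, v ∉ S ∧ e ∈ E' ∧ v ∈ e ∧ (∃ w ∈ e, w ∈ S) ∧
      (∀ W, TightSet K L E' S W → v ∈ W → e ⊆ W) := by
  classical
  -- find a crossing edge in E'
  have hs1 : Multiset.card E' = Multiset.card (E'.filter (fun e => e ⊆ S))
      + Multiset.card (E'.filter (fun e => ¬ e ⊆ S)) := by
    rw [← Multiset.card_add, Multiset.filter_add_not]
  set A1 := E'.filter (fun e => ¬ e ⊆ S) with hA1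
  have hs2 : Multiset.card A1 = Multiset.card (A1.filter (fun e => e ⊆ Sᶜ))
      + Multiset.card (A1.filter (fun e => ¬ e ⊆ Sᶜ)) := by
    rw [← Multiset.card_add, Multiset.filter_add_not]
  set X := A1.filter (fun e => ¬ e ⊆ Sᶜ) with hX
  have hb2 : Multiset.card (A1.filter (fun e => e ⊆ Sᶜ)) ≤ spanCount E' Sᶜ := by
    apply Multiset.card_le_card
    rw [Multiset.le_filter]
    exact ⟨(Multiset.filter_le _ _).trans (Multiset.filter_le _ _),
      fun e he => (Multiset.mem_filter.1 he).2⟩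
  have hcS : spanCount E' S + L ≤ K * S.card := by
    have hKle : K * 1 ≤ K * S.card := Nat.mul_le_mul_left K (Finset.card_pos.2 hSne)
    rcases Nat.eq_zero_or_pos (spanCount E' S) with h0 | hpos
    · omega
    · have := hInv _ hpos
      have hempty : S \ S = ∅ := by simp
      rw [hempty] at this
      simpa using this
  have hcSc : spanCount E' Sᶜ + L + 1 ≤ (K + 1) * Sᶜ.card := by
    have hKle : (K + 1) * 1 ≤ (K + 1) * Sᶜ.card :=
      Nat.mul_le_mul_left _ (Finset.card_pos.2 hScne)
    rcases Nat.eq_zero_or_pos (spanCount E' Sᶜ) with h0 | hpos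
    · omega
    · have := hE Sᶜ (le_trans hpos (spanCount_mono hE'le Sᶜ))
      have := spanCount_mono hE'le Sᶜ
      omega
  have hcards : S.card + Sᶜ.card = Fintype.card V := by
    rw [Finset.card_add_card_compl]
  have hmul : (K + 1) * Fintype.card V = (K + 1) * S.card + (K + 1) * Sᶜ.card := by
    rw [← hcards]; ring
  have hmul2 : (K + 1) * S.card = K * S.card + S.card := by ring
  have hb1 : Multiset.card (E'.filter (fun e => e ⊆ S)) = spanCount E' S := rfl
  have hXpos : 1 ≤ Multiset.card X := by omega
  obtain ⟨e, he⟩ := Multiset.card_pos_iff_exists_mem.1 hXpos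
  have he1 := Multiset.mem_filter.1 he
  have he2 := Multiset.mem_filter.1 he1.1
  obtain ⟨v, hve, hvS⟩ := Finset.not_subset.1 he2.2
  have hwS : ∃ w ∈ e, w ∈ S := by
    obtain ⟨w, hwe, hw2⟩ := Finset.not_subset.1 he1.2
    exact ⟨w, hwe, by simpa using hw2⟩
  -- now either v is in no tight set, or use the descending argument
  by_cases hex : ∃ W, TightSet K L E' S W ∧ v ∈ W
  · obtain ⟨m, hm, hvm⟩ := exists_least_tight hKL hInv hvS hex
    obtain ⟨u, g, h1, h2, h3, h4, h5⟩ :=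
      aux_descend hKL hE'le hE hInv m.card m v le_rfl hm hvm.1 hvS hvm.2
    exact ⟨u, g, h1, h2, h3, h4, h5⟩
  · push_neg at hex
    exact ⟨v, e, hvS, he2.1, hve, hwS, fun W hW hvW => absurd hvW (by
      intro h; exact (hex W ⟨hW.1, hW.2⟩) h)⟩

lemma grow [Fintype V] {K L : ℕ} (hKL : L ≤ K) {E : Multiset (Finset V)}
    (hE : Sparse (K + 1) (L + 1) E)
    (hEcard : Multiset.card E + (L + 1) = (K + 1) * Fintype.card V) :
    ∀ (d : ℕ) (S : Finset V) (T E' : Multiset (Finset V)),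
    Sᶜ.card = d → S.Nonempty → E = E' + T →
    Multiset.card T + 1 = S.card →
    (∀ W, 1 ≤ spanCount T W → spanCount T W + 1 ≤ (W ∩ S).card) →
    Inv4 K L E' S →
    ∃ T' E'', E = E'' + T' ∧ Tight 1 1 T' ∧ Tight K L E'' := by
  intro d
  induction d with
  | zero =>
    intro S T E' hd hSne hsplit hTcard hT3 hInv
    have hSuniv : S = Finset.univ := by
      rwa [Finset.card_eq_zero, Finset.compl_eq_empty_iff] at hd
    subst hSuniv
    refine ⟨T, E', hsplit, ⟨?_, ?_⟩, ⟨?_, ?_⟩⟩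
    · intro W hW
      have := hT3 W hW
      rw [Finset.inter_univ] at this
      omega
    · rw [hTcard]; simp [Finset.card_univ]
    · intro W hW
      have := hInv W hW
      have h0 : W \ (Finset.univ : Finset V) = ∅ := by ext x; simp
      rw [h0] at this
      simpa using this
    · have hc := congrArg Multiset.card hsplit
      rw [Multiset.card_add] at hc
      have h2 : (K + 1) * Fintype.card V = K * Fintype.card V + Fintype.card V := by ring
      have hcu : (Finset.univ : Finset V).card = Fintype.card V := Finset.card_univ
      omega
  | succ d ih =>
    intro S T E' hd hSne hsplit hTcard hT3 hInv
    have hScne : Sᶜ.Nonempty := Finset.card_pos.1 (by omega)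
    have hE'le : E' ≤ E := hsplit ▸ Multiset.le_add_right E' T
    have hcount : Multiset.card E' + L + S.card = (K + 1) * Fintype.card V := by
      have hc := congrArg Multiset.card hsplit
      rw [Multiset.card_add] at hc
      omega
    obtain ⟨v, e, hvS, heE', hve, ⟨w, hwe, hwS⟩, hkey⟩ :=
      step_exists hKL hE'le hE hInv hcount hSne hScne
    -- new state
    set S' := insert v S with hS'
    set T' := e ::ₘ T with hT'
    set E'' := E'.erase e with hE''
    have hcons : e ::ₘ E'' = E' := Multiset.cons_erase heE'
    have hvw : v ≠ w := fun h => hvS (h ▸ hwS)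
    apply ih S' T' E''
    · -- compl card
      have h1 : S'.card = S.card + 1 := by
        rw [hS', Finset.card_insert_of_notMem hvS]
      have h2 := Finset.card_add_card_compl S
      have h3 := Finset.card_add_card_compl S'
      omega
    · exact ⟨v, by simp [hS']⟩
    · rw [hsplit, hT', hE'']
      calc E' + T = (e ::ₘ E'.erase e) + T := by rw [Multiset.cons_erase heE']
        _ = E'.erase e + (e ::ₘ T) := by rw [Multiset.cons_add, Multiset.add_cons]
    · rw [hT']
      simp only [Multiset.card_cons]
      rw [hS', Finset.card_insert_of_notMem hvS]
      omega
    · -- tree invariant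
      intro W hW
      rw [spanCount_cons] at hW ⊢
      by_cases heW : e ⊆ W
      · rw [if_pos heW] at hW ⊢
        have hvW : v ∈ W := heW hve
        have hwW : w ∈ W := heW hwe
        have hinter : W ∩ S' = insert v (W ∩ S) := by
          rw [hS', Finset.inter_insert_of_mem hvW]
        have hvWS : v ∉ W ∩ S := fun h => hvS (Finset.mem_inter.1 h).2
        have hcard : (W ∩ S').card = (W ∩ S).card + 1 := by
          rw [hinter, Finset.card_insert_of_notMem hvWS]
        rcases Nat.eq_zero_or_pos (spanCount T W) with h0 | hpos
        · have hwWS : w ∈ W ∩ S := Finset.mem_inter.2 ⟨hwW, hwS⟩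
          have : 1 ≤ (W ∩ S).card := Finset.card_pos.2 ⟨w, hwWS⟩
          omega
        · have := hT3 W hpos
          omega
      · rw [if_neg heW] at hW ⊢
        simp only [Nat.zero_add] at hW ⊢
        have := hT3 W hW
        have hsub : (W ∩ S).card ≤ (W ∩ S').card := by
          apply Finset.card_le_card
          apply Finset.inter_subset_inter_left
          rw [hS']
          exact Finset.subset_insert _ _
        omega
    · -- Inv4 for new state
      intro W hW
      have hsp : spanCount E' W = (if e ⊆ W then 1 else 0) + spanCount E'' W := by
        rw [← hcons, spanCount_cons]
      by_cases hvW : v ∈ W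
      · have hWS : (W \ S).card = (W \ S').card + 1 := by
          have : W \ S = insert v (W \ S') := by
            ext x
            simp only [Finset.mem_sdiff, Finset.mem_insert, hS', Finset.mem_insert]
            constructor
            · rintro ⟨hxW, hxS⟩
              by_cases hxv : x = v
              · exact Or.inl hxv
              · exact Or.inr ⟨hxW, fun h => h.elim (fun h' => hxv h') hxS⟩
            · rintro (rfl | ⟨hxW, hxS⟩)
              · exact ⟨hvW, hvS⟩
              · exact ⟨hxW, fun h => hxS (Or.inr h)⟩
          rw [this, Finset.card_insert_of_notMem]
          simp [hS']
        by_cases heW : e ⊆ W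
        · have h1 : 1 ≤ spanCount E' W := by rw [hsp, if_pos heW]; omega
          have := hInv W h1
          rw [hsp, if_pos heW] at this
          omega
        · have hEq : spanCount E' W = spanCount E'' W := by rw [hsp, if_neg heW]; omega
          have h1 : 1 ≤ spanCount E' W := by omega
          have hle := hInv W h1
          have hnt : ¬ TightSet K L E' S W := fun ht => heW (hkey W ht hvW)
          have : spanCount E' W + L ≠ K * W.card + (W \ S).card := fun h => hnt ⟨h1, h⟩
          omega
      · have hWS : W \ S' = W \ S := by
          ext x
          simp only [Finset.mem_sdiff, hS', Finset.mem_insert]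
          constructor
          · rintro ⟨hxW, hxS⟩
            exact ⟨hxW, fun h => hxS (Or.inr h)⟩
          · rintro ⟨hxW, hxS⟩
            refine ⟨hxW, fun h => ?_⟩
            rcases h with rfl | h
            · exact hvW hxW
            · exact hxS h
        have hle' : spanCount E'' W ≤ spanCount E' W :=
          spanCount_mono (Multiset.erase_le e E') W
        have h1 : 1 ≤ spanCount E' W := le_trans hW hle'
        have := hInv W h1
        rw [hWS]
        omega

lemma tree_peel [Fintype V] {K L : ℕ} (hKL : L ≤ K) (E : Multiset (Finset V))
    (ht : Tight (K + 1) (L + 1) E) :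
    ∃ T, T ≤ E ∧ Tight 1 1 T ∧ Tight K L (E - T) := by
  classical
  obtain ⟨hsp, hcard⟩ := ht
  have hVpos : 0 < Fintype.card V := by
    by_contra h
    push_neg at h
    have h0 : Fintype.card V = 0 := by omega
    rw [h0, Nat.mul_zero] at hcard
    omega
  obtain ⟨v₀⟩ := Fintype.card_pos_iff.1 hVpos
  have hInit : Inv4 K L E ({v₀} : Finset V) := by
    intro W hW
    have := hsp W hW
    have hcompute : W.card ≤ (W \ {v₀}).card + 1 := by
      by_cases hv : v₀ ∈ W
      · rw [Finset.sdiff_singleton_eq_erase, Finset.card_erase_of_mem hv]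
        omega
      · rw [Finset.sdiff_singleton_eq_erase, Finset.erase_eq_of_notMem hv]
        omega
    have : (K + 1) * W.card = K * W.card + W.card := by ring
    omega
  obtain ⟨T', E'', hsplit, ht1, ht2⟩ :=
    grow hKL hsp hcard (({v₀} : Finset V)ᶜ.card) ({v₀} : Finset V) 0 E rfl
      (Finset.singleton_nonempty v₀) (by simp) (by simp)
      (by intro W hW; simp [spanCount, Multiset.filter_zero] at hW) hInit
  refine ⟨T', ?_, ht1, ?_⟩
  · rw [hsplit]; exact Multiset.le_add_left T' E''
  · have : E - T' = E'' := by
      rw [hsplit, add_tsub_cancel_right]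
    rwa [this]

lemma spanCount_univ [Fintype V] (E : Multiset (Finset V)) :
    spanCount E Finset.univ = Multiset.card E := by
  rw [spanCount, Multiset.filter_eq_self.2 (fun e _ => Finset.subset_univ e)]

/-- partition a multiset by the fiber of a function -/
lemma sum_filter_fiber {ι γ : Type*} [Fintype γ] [DecidableEq γ] (g : ι → γ)
    (s : Multiset ι) : ∑ c : γ, s.filter (fun i => g i = c) = s := by
  induction s using Multiset.induction with
  | empty => simp
  | cons a s ih =>
    simp only [Multiset.filter_cons, Finset.sum_add_distrib, ih]
    rw [Finset.sum_ite_eq Finset.univ (g a) (fun _ => ({a} : Multiset ι))]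
    simp [Multiset.singleton_add]

/-- Hall-type decomposition into maps. -/
lemma maps_decomp [Fintype V] (m : ℕ) (E : Multiset (Finset V))
    (ht : Tight m 0 E) :
    ∃ M : Fin m → Multiset (Finset V), (∑ j, M j) = E ∧ ∀ j, Tight 1 0 (M j) := by
  classical
  obtain ⟨hsp, hcard⟩ := ht
  set l : List (Finset V) := E.toList with hl
  have hlE : (l : Multiset (Finset V)) = E := E.coe_toList
  set n := l.length
  -- Hall's condition
  have hall : ∀ s : Finset (Fin n),
      s.card ≤ (s.biUnion (fun i => (l.get i) ×ˢ (Finset.univ : Finset (Fin m)))).card := by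
    intro s
    rcases s.eq_empty_or_nonempty with rfl | hs
    · simp
    set W : Finset V := s.biUnion (fun i => l.get i) with hW
    have hbi : s.biUnion (fun i => (l.get i) ×ˢ (Finset.univ : Finset (Fin m)))
        = W ×ˢ (Finset.univ : Finset (Fin m)) := by
      ext ⟨v, c⟩
      simp only [Finset.mem_biUnion, Finset.mem_product, Finset.mem_univ, and_true, hW]
    rw [hbi, Finset.card_product, Finset.card_univ, Fintype.card_fin]
    -- s.card ≤ spanCount E W
    have hmap : s.val.map l.get ≤ E := by
      calc s.val.map l.get ≤ Finset.univ.val.map l.get :=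
            Multiset.map_le_map (Finset.val_le_iff.2 (Finset.subset_univ s))
        _ = E := by rw [Fin.univ_val_map]; rw [List.ofFn_get l]; exact hlE
    have hsub : s.val.map l.get ≤ E.filter (fun e => e ⊆ W) := by
      rw [Multiset.le_filter]
      refine ⟨hmap, ?_⟩
      intro e he
      obtain ⟨i, hi, rfl⟩ := Multiset.mem_map.1 he
      exact fun v hv => Finset.mem_biUnion.2 ⟨i, hi, hv⟩
    have h1 : s.card ≤ spanCount E W := by
      have := Multiset.card_le_card hsub
      simpa [spanCount] using this
    have hWspan : 1 ≤ spanCount E W := le_trans (Finset.card_pos.2 hs) h1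
    have h2 := hsp W hWspan
    calc s.card ≤ spanCount E W := h1
      _ ≤ m * W.card := by omega
      _ = W.card * m := Nat.mul_comm _ _
  obtain ⟨f, hfinj, hf⟩ := (Finset.all_card_le_biUnion_card_iff_exists_injective _).1 hall
  have hf1 : ∀ i, (f i).1 ∈ l.get i := fun i => (Finset.mem_product.1 (hf i)).1
  -- the classes
  set M : Fin m → Multiset (Finset V) :=
    fun c => ((Finset.univ.filter (fun i : Fin n => (f i).2 = c)).val).map l.get with hM
  have hsum : (∑ c, M c) = E := by
    have : ∑ c : Fin m, (Finset.univ.filter (fun i : Fin n => (f i).2 = c)).val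
        = (Finset.univ : Finset (Fin n)).val := by
      simp only [Finset.filter_val]
      exact sum_filter_fiber _ _
    calc (∑ c, M c) = ((∑ c : Fin m, (Finset.univ.filter (fun i : Fin n => (f i).2 = c)).val)).map l.get := by
          rw [hM, ← Multiset.coe_mapAddMonoidHom]
          exact (map_sum (Multiset.mapAddMonoidHom l.get) _ _).symm
      _ = E := by rw [this, Fin.univ_val_map, List.ofFn_get l]; exact hlE
  -- per class span bound
  have keyl : ∀ c W, spanCount (M c) W ≤ W.card := by
    intro c W
    have : spanCount (M c) W
        = ((Finset.univ.filter (fun i : Fin n => (f i).2 = c)).filter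
            (fun i => l.get i ⊆ W)).card := by
      rw [hM]
      simp only [spanCount, Multiset.filter_map, Multiset.card_map, Finset.filter_val,
        Finset.card_def, Multiset.filter_filter]
      rfl
    rw [this]
    apply Finset.card_le_card_of_injOn (fun i => (f i).1)
    · intro i hi
      simp only [Finset.mem_coe, Finset.mem_filter] at hi
      exact hi.2 (hf1 i)
    · intro i hi j hj hij
      simp only [Finset.mem_coe, Finset.mem_filter] at hi hj
      apply hfinj
      exact Prod.ext hij (hi.1.2.trans hj.1.2.symm)
  have hcardle : ∀ c, Multiset.card (M c) ≤ Fintype.card V := by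
    intro c
    have := keyl c Finset.univ
    rwa [spanCount_univ, Finset.card_univ] at this
  have hsumcard : ∑ c : Fin m, Multiset.card (M c) = m * Fintype.card V := by
    rw [← Multiset.card_sum, hsum]; omega
  have hcardeq : ∀ c, Multiset.card (M c) = Fintype.card V := by
    by_contra hcon
    push_neg at hcon
    obtain ⟨c0, hc0⟩ := hcon
    have hlt : Multiset.card (M c0) < Fintype.card V := lt_of_le_of_ne (hcardle c0) hc0
    have : ∑ c : Fin m, Multiset.card (M c) < ∑ _c : Fin m, Fintype.card V :=
      Finset.sum_lt_sum (fun c _ => hcardle c) ⟨c0, Finset.mem_univ _, hlt⟩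
    simp only [Finset.sum_const, Finset.card_univ, Fintype.card_fin, smul_eq_mul] at this
    omega
  exact ⟨M, hsum, fun c => ⟨fun W hW => by simpa using keyl c W, by simpa using hcardeq c⟩⟩


lemma main_decomp [Fintype V] :
    ∀ (l k : ℕ) (E : Multiset (Finset V)), 1 ≤ k → l ≤ k → Tight k l E →
    ∃ (T : Fin l → Multiset (Finset V)) (M : Fin (k - l) → Multiset (Finset V)),
      (∑ i, T i) + (∑ j, M j) = E ∧
      (∀ i, Tight 1 1 (T i)) ∧ (∀ j, Tight 1 0 (M j)) := by
  intro l
  induction l with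
  | zero =>
    intro k E hk hl ht
    obtain ⟨M, hsum, hM⟩ := maps_decomp k E ht
    exact ⟨fun i => i.elim0, M, by simpa using hsum, fun i => i.elim0, hM⟩
  | succ l ihl =>
    intro k E hk hl ht
    obtain ⟨K, rfl⟩ : ∃ K, k = K + 1 := ⟨k - 1, by omega⟩
    have hLK : l ≤ K := by omega
    obtain ⟨T₀, hT₀le, hT₀, hrest⟩ := tree_peel hLK E ht
    rcases Nat.eq_zero_or_pos K with rfl | hKpos
    · -- K = 0, so l = 0 and E is a single tree
      have hl0 : l = 0 := by omega
      subst hl0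
      have hE0 : E - T₀ = 0 := by
        have h2 := hrest.2
        rw [Nat.zero_mul] at h2
        exact Multiset.card_eq_zero.1 (by omega)
      have hET : E = T₀ := by
        have := tsub_eq_zero_iff_le.1 hE0
        exact le_antisymm this hT₀le
      refine ⟨fun _ => T₀, fun j => j.elim0, ?_, fun _ => hT₀, fun j => j.elim0⟩
      simp [hET]
    · obtain ⟨T, M, hsum, hT, hM⟩ := ihl K (E - T₀) hKpos hLK hrest
      have hcast : (K + 1) - (l + 1) = K - l := by omega
      refine ⟨Fin.cons T₀ T, fun j => M (Fin.cast hcast j), ?_, ?_, fun j => hM _⟩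
      · rw [Fin.sum_cons]
        have heq : ∑ j : Fin (K + 1 - (l + 1)), M (Fin.cast hcast j)
            = ∑ j : Fin (K - l), M j :=
          Fintype.sum_equiv (finCongr hcast) _ _ (fun j => rfl)
        rw [heq, add_assoc, hsum]
        rw [add_comm T₀ (E - T₀), tsub_add_cancel_of_le hT₀le]
      · intro i
        refine Fin.cases ?_ ?_ i
        · exact hT₀
        · exact fun j => by simpa using hT j

end MT

/-- Maps-and-trees decomposition: for `0 ≤ ℓ ≤ k`, a `(k,ℓ)`-tight hypergraph is the
edge-disjoint union of `ℓ` spanning trees ((1,1)-tight hypergraphs) and `k - ℓ` spanning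
maps ((1,0)-tight hypergraphs). -/
theorem stmt_12 {V : Type*} [Fintype V] [DecidableEq V] (k l : ℕ) (hk : 1 ≤ k)
    (hl : l ≤ k) (E : Multiset (Finset V)) (hne : ∀ e ∈ E, e.Nonempty)
    (ht : Tight k l E) :
    ∃ (T : Fin l → Multiset (Finset V)) (M : Fin (k - l) → Multiset (Finset V)),
      (∑ i, T i) + (∑ j, M j) = E ∧
      (∀ i, Tight 1 1 (T i)) ∧ (∀ j, Tight 1 0 (M j)) :=
  MT.main_decomp l k E hk hl ht
end

section
/- Fix a finite set V and integers k ≥ 1 and ℓ ≥ 0. Let the ground set be S = {(e, j) : e a nonempty subset of V, 1 ≤ j ≤ k·|e|}, and for X ⊆ S let G_X be the hypergraph on V whose edge multiset contains each e with multiplicity |{j : (e,j) ∈ X}|. Then the family { X ⊆ S : G_X is (k,ℓ)-sparse } is the family of independent sets of a matroid on S; in particular, it is nonempty, downward closed, and satisfies the matroid augmentation property, and all maximal (k,ℓ)-sparse edge multisets on V (with multiplicities bounded by k·|e|) have the same cardinality. -/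
/-- The ground set of the `(k,ℓ)`-sparsity matroid on the vertex set `V`: pairs of a
nonempty edge `e ⊆ V` together with an index `j < k·|e|`. -/
def SparsityGround (V : Type*) [DecidableEq V] (k : ℕ) : Type _ :=
  (e : {t : Finset V // t.Nonempty}) × Fin (k * e.val.card)

/-- The edge multiset of a set of ground elements. -/
def edgesOf {V : Type*} [DecidableEq V] {k : ℕ} (X : Finset (SparsityGround V k)) :
    Multiset (Finset V) :=
  X.val.map fun p => p.1.val

/-!
Sparsity passes to subsets, so the content is augmentation. Call `W` tight for a sparse `I` if
it spans an element of `I` and exactly `k|W| - ℓ` of them. The span count is supermodular and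
`k|W|` is modular, so two tight sets whose intersection spans an element of `I` have a tight
union; hence distinct maximal tight sets span disjoint parts of `I`. If no element of a larger
sparse `J` could be added to `I`, each element of `J \ I` would violate the bound on some tight
set, hence lie in a maximal one. Inside each maximal tight set `J` spans at most as many elements
as `I` does, and outside them `J` only has elements of `I`, so `|J| ≤ |I|`.
-/

open Finset

section Spanned

variable {α V : Type*} [DecidableEq V]

def spanned (ι : α → Finset V) (X : Finset α) (W : Finset V) : Finset α :=
  {x ∈ X | ι x ⊆ W}

variable {ι : α → Finset V} {X : Finset α} {W W₁ W₂ : Finset V} {x : α}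

@[simp]
lemma mem_spanned : x ∈ spanned ι X W ↔ x ∈ X ∧ ι x ⊆ W :=
  mem_filter

lemma spanCount_map (ι : α → Finset V) (X : Finset α) (W : Finset V) :
    spanCount (X.val.map ι) W = #(spanned ι X W) := by
  rw [spanCount, Multiset.filter_map, Multiset.card_map]
  rfl

lemma spanned_mono_right (h : W₁ ⊆ W₂) : spanned ι X W₁ ⊆ spanned ι X W₂ :=
  fun _ hx => mem_spanned.2 ⟨(mem_spanned.1 hx).1, (mem_spanned.1 hx).2.trans h⟩

variable [DecidableEq α]

lemma spanned_inter : spanned ι X (W₁ ∩ W₂) = spanned ι X W₁ ∩ spanned ι X W₂ := by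
  ext x
  simp only [mem_spanned, mem_inter, subset_inter_iff]
  tauto

lemma card_spanned_add_card_spanned_le :
    #(spanned ι X W₁) + #(spanned ι X W₂) ≤
      #(spanned ι X (W₁ ∪ W₂)) + #(spanned ι X (W₁ ∩ W₂)) := by
  rw [← card_union_add_card_inter, spanned_inter]
  gcongr
  exact union_subset (spanned_mono_right subset_union_left)
    (spanned_mono_right subset_union_right)

end Spanned

section Sparse

variable {V : Type*} [DecidableEq V] {k l : ℕ}

lemma Sparse.of_le {E E' : Multiset (Finset V)} (hE : Sparse k l E) (h : E' ≤ E) :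
    Sparse k l E' := by
  intro W hW
  have hle : spanCount E' W ≤ spanCount E W :=
    Multiset.card_le_card (Multiset.filter_le_filter _ h)
  have := hE W (hW.trans hle)
  omega

lemma sparse_zero : Sparse k l (0 : Multiset (Finset V)) := by
  intro W hW
  simp [spanCount] at hW

end Sparse

section Tight

variable {α V : Type*} [DecidableEq V] {ι : α → Finset V} {k l : ℕ}
  {I J : Finset α} {W W₁ W₂ : Finset V}

lemma sparse_map_iff : Sparse k l (I.val.map ι) ↔
    ∀ W, (spanned ι I W).Nonempty → #(spanned ι I W) + l ≤ k * #W := by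
  simp only [Sparse, spanCount_map, one_le_card]

lemma Sparse.card_spanned_add_le (hI : Sparse k l (I.val.map ι))
    (hW : (spanned ι I W).Nonempty) : #(spanned ι I W) + l ≤ k * #W :=
  sparse_map_iff.1 hI W hW

variable (ι k l) in
def IsTight (I : Finset α) (W : Finset V) : Prop :=
  (spanned ι I W).Nonempty ∧ #(spanned ι I W) + l = k * #W

variable [DecidableEq α]

lemma IsTight.union (hI : Sparse k l (I.val.map ι)) (h₁ : IsTight ι k l I W₁)
    (h₂ : IsTight ι k l I W₂) (h : (spanned ι I (W₁ ∩ W₂)).Nonempty) :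
    IsTight ι k l I (W₁ ∪ W₂) := by
  have hne : (spanned ι I (W₁ ∪ W₂)).Nonempty :=
    h₁.1.mono (spanned_mono_right subset_union_left)
  have hsup := card_spanned_add_card_spanned_le (ι := ι) (X := I) (W₁ := W₁) (W₂ := W₂)
  have hunion := hI.card_spanned_add_le hne
  have hinter := hI.card_spanned_add_le h
  have hcard : k * #(W₁ ∪ W₂) + k * #(W₁ ∩ W₂) = k * #W₁ + k * #W₂ := by
    rw [← mul_add, ← mul_add, card_union_add_card_inter]
  exact ⟨hne, by linarith [h₁.2, h₂.2]⟩

lemma disjoint_spanned_of_maximal_isTight (hI : Sparse k l (I.val.map ι))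
    (h₁ : Maximal (IsTight ι k l I) W₁) (h₂ : Maximal (IsTight ι k l I) W₂) (hne : W₁ ≠ W₂) :
    Disjoint (spanned ι I W₁) (spanned ι I W₂) := by
  rw [← disjoint_coe, Set.disjoint_iff_inter_eq_empty, ← coe_inter, ← spanned_inter,
    coe_eq_empty, ← not_nonempty_iff_eq_empty]
  intro h
  have hunion := h₁.1.union hI h₂.1 h
  exact hne ((h₁.eq_of_le hunion subset_union_left).trans
    (h₂.eq_of_le hunion subset_union_right).symm)

lemma exists_isTight_of_not_sparse_insert {x : α}
    (hI : Sparse k l (I.val.map ι)) (hx : ¬ Sparse k l ((insert x I).val.map ι))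
    (hxk : l < k * #(ι x)) : ∃ W, IsTight ι k l I W ∧ ι x ⊆ W := by
  simp only [sparse_map_iff, not_forall, not_le] at hx
  obtain ⟨W, hWne, hW⟩ := hx
  have hspan : spanned ι (insert x I) W = if ι x ⊆ W then insert x (spanned ι I W)
      else spanned ι I W := filter_insert _ _ _
  by_cases hxW : ι x ⊆ W
  · rw [hspan, if_pos hxW] at hW
    have hins := card_insert_le x (spanned ι I W)
    have hxW' : k * #(ι x) ≤ k * #W := Nat.mul_le_mul_left k (card_le_card hxW)
    have hIW : (spanned ι I W).Nonempty := by
      rw [← one_le_card]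
      omega
    have := hI.card_spanned_add_le hIW
    exact ⟨W, ⟨hIW, by omega⟩, hxW⟩
  · rw [hspan, if_neg hxW] at hW hWne
    exact absurd (hI.card_spanned_add_le hWne) (not_le.2 hW)

lemma card_le_of_isTight_cover (hJ : Sparse k l (J.val.map ι))
    (𝒯 : Finset (Finset V)) (htight : ∀ T ∈ 𝒯, IsTight ι k l I T)
    (hdisj : (𝒯 : Set (Finset V)).PairwiseDisjoint (spanned ι I))
    (hcover : ∀ x ∈ J, x ∉ I → ∃ T ∈ 𝒯, ι x ⊆ T) : #J ≤ #I := by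
  set U := 𝒯.biUnion (spanned ι I)
  have hUI : U ⊆ I := biUnion_subset.2 fun _ _ => filter_subset _ _
  have hJU : J ⊆ 𝒯.biUnion (spanned ι J) ∪ (I \ U) := by
    intro x hxJ
    by_cases hx : ∃ T ∈ 𝒯, ι x ⊆ T
    · obtain ⟨T, hT, hxT⟩ := hx
      exact mem_union_left _ (mem_biUnion.2 ⟨T, hT, mem_spanned.2 ⟨hxJ, hxT⟩⟩)
    · have hxI : x ∈ I := by_contra fun hxI => hx (hcover x hxJ hxI)
      refine mem_union_right _ (mem_sdiff.2 ⟨hxI, fun hxU => hx ?_⟩)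
      obtain ⟨T, hT, hxT⟩ := mem_biUnion.1 hxU
      exact ⟨T, hT, (mem_spanned.1 hxT).2⟩
  have hspanJ : ∀ T ∈ 𝒯, #(spanned ι J T) ≤ #(spanned ι I T) := by
    intro T hT
    rcases (spanned ι J T).eq_empty_or_nonempty with hempty | hne
    · simp [hempty]
    · have := hJ.card_spanned_add_le hne
      have := (htight T hT).2
      omega
  calc #J ≤ #(𝒯.biUnion (spanned ι J)) + #(I \ U) := (card_le_card hJU).trans (card_union_le _ _)
    _ ≤ ∑ T ∈ 𝒯, #(spanned ι I T) + #(I \ U) := by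
      gcongr
      exact card_biUnion_le.trans (sum_le_sum hspanJ)
    _ = #U + #(I \ U) := by rw [card_biUnion hdisj]
    _ = #I := by rw [add_comm, card_sdiff_add_card_eq_card hUI]

lemma Sparse.exists_insert_of_card_lt [Fintype V]
    (hI : Sparse k l (I.val.map ι)) (hJ : Sparse k l (J.val.map ι)) (hIJ : #I < #J) :
    ∃ x ∈ J, x ∉ I ∧ Sparse k l ((insert x I).val.map ι) := by
  classical
  by_contra! hblocked
  refine (card_le_of_isTight_cover hJ {W | Maximal (IsTight ι k l I) W} ?_ ?_ ?_).not_gt hIJ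
  · exact fun T hT => (mem_filter.1 hT).2.prop
  · intro W₁ h₁ W₂ h₂ hne
    exact disjoint_spanned_of_maximal_isTight hI (mem_filter.1 h₁).2 (mem_filter.1 h₂).2 hne
  · intro x hxJ hxI
    have hxk : l < k * #(ι x) := by
      have hx : (spanned ι J (ι x)).Nonempty := ⟨x, mem_spanned.2 ⟨hxJ, subset_rfl⟩⟩
      have := hJ.card_spanned_add_le hx
      have := one_le_card.2 hx
      omega
    obtain ⟨W, hW, hxW⟩ := exists_isTight_of_not_sparse_insert hI (hblocked x hxJ hxI) hxk
    obtain ⟨T, hWT, hT⟩ := Finite.exists_le_maximal hW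
    exact ⟨T, mem_filter.2 ⟨mem_univ _, hT⟩, hxW.trans hWT⟩

variable [Fintype V]

variable (ι k l) in
def sparsityMatroid : Matroid α :=
  (IndepMatroid.ofFinset Set.univ (fun I => Sparse k l (I.val.map ι))
    (by rw [empty_val, Multiset.map_zero]; exact sparse_zero)
    (fun _ _ hJ hIJ => hJ.of_le (Multiset.map_le_map (val_le_iff.2 hIJ)))
    (fun _ _ hI hJ hIJ => hI.exists_insert_of_card_lt hJ hIJ)
    (fun _ _ => Set.subset_univ _)).matroid

@[simp]
lemma sparsityMatroid_E : (sparsityMatroid ι k l).E = Set.univ := rfl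

@[simp]
lemma sparsityMatroid_indep_coe_iff :
    (sparsityMatroid ι k l).Indep ↑I ↔ Sparse k l (I.val.map ι) := by
  rw [sparsityMatroid, IndepMatroid.matroid_indep_iff, IndepMatroid.ofFinset_indep]

end Tight

lemma Matroid.Indep.card_le_of_maximal_finset {α : Type*} [DecidableEq α] {M : Matroid α}
    {X Y : Finset α} (hY : M.Indep ↑Y) (hX : M.Indep ↑X)
    (hmax : ∀ Z : Finset α, X ⊆ Z → M.Indep ↑Z → Z = X) : #Y ≤ #X := by
  by_contra! h
  obtain ⟨e, -, heX, he⟩ := hX.augment_finset hY h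
  have hZ := hmax (insert e X) (subset_insert e X) (by rwa [coe_insert])
  exact heX (hZ ▸ mem_insert_self e X)

theorem stmt_14_general {V : Type*} [Fintype V] [DecidableEq V] (k l : ℕ) :
    ∃ M : Matroid (SparsityGround V k),
      M.E = Set.univ ∧
      (∀ X : Finset (SparsityGround V k), M.Indep ↑X ↔ Sparse k l (edgesOf X)) ∧
      (∀ X Y : Finset (SparsityGround V k),
        (Sparse k l (edgesOf X) ∧
          ∀ Z : Finset (SparsityGround V k), X ⊆ Z → Sparse k l (edgesOf Z) → Z = X) →
        (Sparse k l (edgesOf Y) ∧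
          ∀ Z : Finset (SparsityGround V k), Y ⊆ Z → Sparse k l (edgesOf Z) → Z = Y) →
        X.card = Y.card) := by
  classical
  have hindep : ∀ X : Finset (SparsityGround V k),
      (sparsityMatroid (fun p : SparsityGround V k => p.1.val) k l).Indep ↑X ↔
        Sparse k l (edgesOf X) :=
    fun _ => sparsityMatroid_indep_coe_iff
  refine ⟨_, sparsityMatroid_E, hindep, fun X Y hX hY => ?_⟩
  simp only [← hindep] at hX hY
  exact le_antisymm (hX.1.card_le_of_maximal_finset hY.1 hY.2)
    (hY.1.card_le_of_maximal_finset hX.1 hX.2)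

/-- The `(k,ℓ)`-sparse hypergraphs on `V` (with multiplicities bounded by `k·|e|`) form
the independent sets of a matroid on the ground set `SparsityGround V k`; in particular
all maximal `(k,ℓ)`-sparse edge multisets have the same cardinality. -/
theorem stmt_14 {V : Type*} [Fintype V] [DecidableEq V] (k l : ℕ) (hk : 1 ≤ k) :
    ∃ M : Matroid (SparsityGround V k),
      M.E = Set.univ ∧
      (∀ X : Finset (SparsityGround V k), M.Indep ↑X ↔ Sparse k l (edgesOf X)) ∧
      (∀ X Y : Finset (SparsityGround V k),
        (Sparse k l (edgesOf X) ∧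
          ∀ Z : Finset (SparsityGround V k), X ⊆ Z → Sparse k l (edgesOf Z) → Z = X) →
        (Sparse k l (edgesOf Y) ∧
          ∀ Z : Finset (SparsityGround V k), Y ⊆ Z → Sparse k l (edgesOf Z) → Z = Y) →
        X.card = Y.card) :=
  stmt_14_general k l
end

section
/- Let k ≥ 1 and ℓ ≥ 0 be integers and let V be a finite set. If a configuration (E, t, peb) of the (k,ℓ)-pebble game on V is reachable from the initial configuration, then the hypergraph H = (V,E) is (k,ℓ)-sparse; if moreover Σ_{v∈V} peb(v) = ℓ, then H is (k,ℓ)-tight. -/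
/-- Reachable configurations of the `(k,ℓ)`-pebble game on the vertex type `V`.
A configuration is a multiset `D` of oriented edges (an edge together with its tail)
and a pebble function `peb`.  The initial configuration has no edges and `k` pebbles on
each vertex.  The moves are the add-edge move (an edge with at least `ℓ+1` pebbles on its
ends may be added, picking up a pebble from its chosen tail) and the pebble-shift move
(a pebble on an end `v` of an edge with tail `w` may be moved to `w`, making `v` the new
tail). -/
inductive PebbleReach {V : Type*} [DecidableEq V] (k l : ℕ) :
    Multiset (Finset V × V) → (V → ℕ) → Prop
  | init : PebbleReach k l 0 (fun _ => k)
  | addEdge {D : Multiset (Finset V × V)} {peb : V → ℕ} (e : Finset V) (v : V) :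
      PebbleReach k l D peb → e.Nonempty → v ∈ e →
      l + 1 ≤ ∑ u ∈ e, peb u → 1 ≤ peb v →
      PebbleReach k l ((e, v) ::ₘ D) (Function.update peb v (peb v - 1))
  | shift {D : Multiset (Finset V × V)} {peb : V → ℕ} (e : Finset V) (w v : V) :
      PebbleReach k l D peb → (e, w) ∈ D → v ∈ e → 1 ≤ peb v →
      PebbleReach k l ((e, v) ::ₘ D.erase (e, w))
        (Function.update (Function.update peb v (peb v - 1)) w
          (Function.update peb v (peb v - 1) w + 1))

/-!
Every edge of a reachable configuration has its tail among its vertices, and every vertex `v`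
satisfies `peb v + outdeg v = k`, where `outdeg v` counts the edges with tail `v`. Hence the
edges spanned by `W` number at most `∑_{v ∈ W} outdeg v = k|W| - ∑_{v ∈ W} peb v`. An edge
`e ⊆ W` can only be added while at least `ℓ + 1` pebbles lie on `e ⊆ W`, which keeps the span
of `W` at most `k|W| - ℓ`; pebble shifts only reorient edges. Summing the invariant over all
of `V` gives `|E| + ∑ peb = k|V|`, whence tightness when `ℓ` pebbles remain.
-/

theorem spanCount_map_fst_le_sum_count_snd {V : Type*} [DecidableEq V]
    {D : Multiset (Finset V × V)} (hD : ∀ p ∈ D, p.2 ∈ p.1) (W : Finset V) :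
    spanCount (D.map Prod.fst) W ≤ ∑ v ∈ W, (D.map Prod.snd).count v := by
  set S := D.filter fun p => p.1 ⊆ W
  have hS : ∀ v ∈ S.map Prod.snd, v ∈ W := by
    simp only [Multiset.mem_map, Multiset.mem_filter, S]
    rintro _ ⟨p, ⟨hp, hpW⟩, rfl⟩
    exact hpW (hD p hp)
  calc spanCount (D.map Prod.fst) W = Multiset.card (S.map Prod.snd) := by
        simp [spanCount, Multiset.filter_map, S]
    _ = ∑ v ∈ W, (S.map Prod.snd).count v := (Multiset.sum_count_eq_card hS).symm
    _ ≤ ∑ v ∈ W, (D.map Prod.snd).count v := by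
        gcongr
        exact Multiset.filter_le _ _

theorem spanCount_cons {V : Type*} [DecidableEq V] (e : Finset V) (E : Multiset (Finset V))
    (W : Finset V) : spanCount (e ::ₘ E) W = spanCount E W + if e ⊆ W then 1 else 0 := by
  simp only [spanCount, Multiset.filter_cons]
  split_ifs <;> simp [add_comm]

namespace PebbleReach

variable {V : Type*} [DecidableEq V] {k l : ℕ} {D : Multiset (Finset V × V)} {peb : V → ℕ}

theorem tail_mem (h : PebbleReach k l D peb) : ∀ p ∈ D, p.2 ∈ p.1 := by
  induction h with
  | init => simp
  | addEdge e v _ _ hv _ _ ih =>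
    simpa [hv] using ih
  | shift e w v _ _ hv _ ih =>
    simpa [hv] using fun p hp => ih p (Multiset.mem_of_mem_erase hp)

theorem peb_add_count_tail (h : PebbleReach k l D peb) (u : V) :
    peb u + (D.map Prod.snd).count u = k := by
  induction h generalizing u with
  | init => simp
  | addEdge e v _ _ _ _ hp ih =>
    have := ih u
    rw [Multiset.map_cons, Multiset.count_cons]
    clear ih
    rcases eq_or_ne u v with rfl | huv <;> simp_all
    omega
  | @shift D peb e w v _ hmem _ hp ih =>
    have := ih u
    rw [← Multiset.cons_erase hmem, Multiset.map_cons, Multiset.count_cons] at this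
    rw [Multiset.map_cons, Multiset.count_cons]
    clear ih
    rcases eq_or_ne u v with rfl | huv <;> rcases eq_or_ne u w with rfl | huw <;>
      simp_all [Function.update_apply] <;> omega

theorem sum_peb_add_sum_count_tail (h : PebbleReach k l D peb) (W : Finset V) :
    ∑ v ∈ W, peb v + ∑ v ∈ W, (D.map Prod.snd).count v = k * W.card := by
  rw [← Finset.sum_add_distrib, Finset.sum_congr rfl fun v _ => h.peb_add_count_tail v,
    Finset.sum_const, smul_eq_mul, mul_comm]

theorem spanCount_add_sum_peb_le (h : PebbleReach k l D peb) (W : Finset V) :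
    spanCount (D.map Prod.fst) W + ∑ v ∈ W, peb v ≤ k * W.card := by
  have hspan := spanCount_map_fst_le_sum_count_snd h.tail_mem W
  have hsum := h.sum_peb_add_sum_count_tail W
  omega

theorem sparse (h : PebbleReach k l D peb) : Sparse k l (D.map Prod.fst) := by
  induction h with
  | init => simp [Sparse, spanCount]
  | @addEdge D peb e v h _ _ hsum _ ih =>
    intro W hW
    rw [Multiset.map_cons, spanCount_cons] at hW ⊢
    by_cases heW : e ⊆ W
    · have hbound := h.spanCount_add_sum_peb_le W
      have hpebW := hsum.trans (Finset.sum_le_sum_of_subset heW)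
      simp only [heW, if_true]
      omega
    · simp only [heW, if_false, add_zero] at hW ⊢
      exact ih W hW
  | @shift D peb e w v _ hmem _ _ ih =>
    rwa [Multiset.map_cons, Multiset.map_erase_of_mem _ _ hmem,
      Multiset.cons_erase (Multiset.mem_map_of_mem Prod.fst hmem)]

theorem card_add_sum_peb [Fintype V] (h : PebbleReach k l D peb) :
    Multiset.card D + ∑ v, peb v = k * Fintype.card V := by
  have hsum := h.sum_peb_add_sum_count_tail Finset.univ
  rw [Multiset.sum_count_eq_card fun v _ => Finset.mem_univ v, Multiset.card_map,
    Finset.card_univ] at hsum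
  omega

end PebbleReach

theorem stmt_15_general {V : Type*} [Fintype V] [DecidableEq V] (k l : ℕ)
    (D : Multiset (Finset V × V)) (peb : V → ℕ) (h : PebbleReach k l D peb) :
    Sparse k l (D.map Prod.fst) ∧
      ((∑ v, peb v) = l → Tight k l (D.map Prod.fst)) := by
  refine ⟨h.sparse, fun hl => ⟨h.sparse, ?_⟩⟩
  rw [Multiset.card_map, ← h.card_add_sum_peb, hl]

/-- Any hypergraph arising from a reachable configuration of the `(k,ℓ)`-pebble game is
`(k,ℓ)`-sparse; if moreover exactly `ℓ` pebbles remain, it is `(k,ℓ)`-tight. -/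
theorem stmt_15 {V : Type*} [Fintype V] [DecidableEq V] (k l : ℕ) (hk : 1 ≤ k)
    (D : Multiset (Finset V × V)) (peb : V → ℕ) (h : PebbleReach k l D peb) :
    Sparse k l (D.map Prod.fst) ∧
      ((∑ v, peb v) = l → Tight k l (D.map Prod.fst)) :=
  stmt_15_general k l D peb h
end

section
/- Let k ≥ 1 and ℓ ≥ 0 be integers, let (E, t, peb) be a reachable configuration of the (k,ℓ)-pebble game on a finite vertex set V, and let e ⊆ V be a nonempty set such that the hypergraph (V, E ⊎ {e}) is (k,ℓ)-sparse. If Σ_{v∈e} peb(v) ≤ ℓ, then there is a configuration (E, t', peb') obtainable from (E, t, peb) by pebble-shift moves only such that peb'(v) ≥ peb(v) for every v ∈ e and Σ_{v∈e} peb'(v) = Σ_{v∈e} peb(v) + 1; i.e., a pebble not on e can be brought to an end of e without removing any pebble already on e. -/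
/-- A single pebble-shift move between configurations of the pebble game. -/
def ShiftStep {V : Type*} [DecidableEq V]
    (c c' : Multiset (Finset V × V) × (V → ℕ)) : Prop :=
  ∃ (e : Finset V) (w v : V), (e, w) ∈ c.1 ∧ v ∈ e ∧ 1 ≤ c.2 v ∧
    c'.1 = (e, v) ::ₘ c.1.erase (e, w) ∧
    c'.2 = Function.update (Function.update c.2 v (c.2 v - 1)) w
      (Function.update c.2 v (c.2 v - 1) w + 1)

/-! Call `u` reachable from `e` if a pebble on `u` can be walked onto `e` by shifting it along a
chain of edges, each from one of its ends to its tail. If some reachable vertex outside `e` holds a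
pebble, the shifts along its chain bring it to `e`. Otherwise the reachable set `R ⊇ e` contains
every edge whose tail lies in `R`, and its only pebbles are the `≤ ℓ` ones on `e`. As each vertex
carries `k` pebbles and tails in total, `R` then spans at least `k|R| - ℓ` edges of `D`, and `e`
is one more, against `(k,ℓ)`-sparsity. -/

section

variable {V : Type*} [DecidableEq V] {k l : ℕ} {D : Multiset (Finset V × V)} {peb : V → ℕ}

theorem PebbleReach.tail_mem_s16 (h : PebbleReach k l D peb) : ∀ p ∈ D, p.2 ∈ p.1 := by
  induction h with
  | init => simp
  | addEdge f v _ _ hv _ _ ih =>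
    simpa [hv] using ih
  | shift f w v _ _ hv _ ih =>
    simpa [hv] using fun p hp => ih p (Multiset.mem_of_mem_erase hp)

theorem PebbleReach.peb_add_count_tail_s16 (h : PebbleReach k l D peb) (u : V) :
    peb u + (D.map Prod.snd).count u = k := by
  induction h with
  | init => simp
  | addEdge f v _ _ _ _ hv ih =>
    simp only [Multiset.map_cons, Multiset.count_cons, Function.update_apply]
    grind
  | @shift D peb f w v _ hfw _ hv ih =>
    rw [← Multiset.cons_erase hfw] at ih
    simp only [Multiset.map_cons, Multiset.count_cons, Function.update_apply] at ih ⊢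
    grind

theorem PebbleReach.sum_peb_add_card_filter_tail (h : PebbleReach k l D peb) (R : Finset V) :
    ∑ v ∈ R, peb v + ((D.map Prod.snd).filter (· ∈ R)).card = k * R.card := by
  have hcount : ∑ v ∈ R, (D.map Prod.snd).count v
      = ∑ v ∈ R, ((D.map Prod.snd).filter (· ∈ R)).count v :=
    Finset.sum_congr rfl fun v hv => (Multiset.count_filter_of_pos hv).symm
  rw [← Multiset.sum_count_eq_card (s := R) (by simp), ← hcount, ← Finset.sum_add_distrib,
    Finset.sum_congr rfl fun v _ => h.peb_add_count_tail_s16 v, Finset.sum_const, smul_eq_mul,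
    mul_comm]

theorem card_filter_tail_eq_spanCount {R : Finset V} (htail : ∀ p ∈ D, p.2 ∈ p.1)
    (hR : ∀ p ∈ D, p.2 ∈ R → p.1 ⊆ R) :
    ((D.map Prod.snd).filter (· ∈ R)).card = spanCount (D.map Prod.fst) R := by
  rw [spanCount, Multiset.filter_map, Multiset.filter_map, Multiset.card_map, Multiset.card_map]
  congr 1
  exact Multiset.filter_congr fun p hp => ⟨hR p hp, fun hsub => hsub (htail p hp)⟩

end

theorem update_shift_apply_of_ne {V : Type*} [DecidableEq V] (peb : V → ℕ) (w : V) {v x : V}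
    (hxv : x ≠ v) :
    Function.update (Function.update peb v (peb v - 1)) w
      (Function.update peb v (peb v - 1) w + 1) x = peb x + if x = w then 1 else 0 := by
  by_cases hxw : x = w
  · subst hxw; simp [hxv]
  · simp [hxv, hxw]

/-- A pebble on `u` can be shifted onto `e` along the oriented edges of `D`: the edge `(f, w)`
carries it from `u ∈ f` to the tail `w`.  The edge is erased for the rest of the chain, since the
shift reverses it. -/
inductive ShiftPath {V : Type*} [DecidableEq V] (e : Finset V) :
    Multiset (Finset V × V) → V → Prop
  | base {D : Multiset (Finset V × V)} {u : V} : u ∈ e → ShiftPath e D u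
  | step {D : Multiset (Finset V × V)} {f : Finset V} {w u : V} :
      (f, w) ∈ D → u ∈ f → u ∉ e → ShiftPath e (D.erase (f, w)) w → ShiftPath e D u

namespace ShiftPath

variable {V : Type*} [DecidableEq V] {e : Finset V} {D : Multiset (Finset V × V)}

theorem mono {u : V} (h : ShiftPath e D u) {D' : Multiset (Finset V × V)} (hle : D ≤ D') :
    ShiftPath e D' u := by
  induction h generalizing D' with
  | base hu => exact base hu
  | step hmem huf hue _ ih =>
    exact step (Multiset.mem_of_le hle hmem) huf hue (ih (Multiset.erase_le_erase _ hle))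

/-- If the chain from `u` uses the erased edge `(f, w)`, its part after that edge starts at `w`. -/
theorem erase {u : V} (h : ShiftPath e D u) (f : Finset V) (w : V) :
    ShiftPath e (D.erase (f, w)) u ∨ ShiftPath e (D.erase (f, w)) w := by
  induction h with
  | base hu => exact .inl (base hu)
  | @step D f' w' u hmem huf hue hp ih =>
    rcases ih with ih | ih
    · by_cases hfw : (f', w') = (f, w)
      · obtain ⟨rfl, rfl⟩ := Prod.mk.inj hfw
        exact .inr (ih.mono (Multiset.erase_le _ _))
      · refine .inl (step ((Multiset.mem_erase_of_ne hfw).mpr hmem) huf hue ?_)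
        rwa [Multiset.erase_comm]
    · exact .inr (ih.mono (Multiset.erase_le_erase _ (Multiset.erase_le _ _)))

theorem of_mem_tail {f : Finset V} {w u : V} (hw : ShiftPath e D w) (hfw : (f, w) ∈ D)
    (hu : u ∈ f) : ShiftPath e D u := by
  by_cases hue : u ∈ e
  · exact base hue
  · exact (hw.erase f w).elim (step hfw hu hue) (step hfw hu hue)

theorem exists_shifts {D₀ : Multiset (Finset V × V)} {u : V} (h : ShiftPath e D₀ u)
    {D : Multiset (Finset V × V)} {peb : V → ℕ} (hle : D₀ ≤ D) (hu : 1 ≤ peb u) :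
    ∃ (D' : Multiset (Finset V × V)) (peb' : V → ℕ),
      Relation.ReflTransGen ShiftStep (D, peb) (D', peb') ∧
      D'.map Prod.fst = D.map Prod.fst ∧
      (∀ v ∈ e, peb v ≤ peb' v) ∧
      (∑ v ∈ e, peb' v) = (∑ v ∈ e, peb v) + if u ∈ e then 0 else 1 := by
  induction h generalizing D peb with
  | base hue => exact ⟨D, peb, .refl, rfl, fun _ _ => le_rfl, by simp [hue]⟩
  | @step D₀ f w u hmem huf hue _ ih =>
    have hfw : (f, w) ∈ D := Multiset.mem_of_le hle hmem
    set peb₁ := Function.update (Function.update peb u (peb u - 1)) w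
      (Function.update peb u (peb u - 1) w + 1)
    have hpeb₁e : ∀ x ∈ e, peb₁ x = peb x + if x = w then 1 else 0 := fun x hx =>
      update_shift_apply_of_ne peb w (ne_of_mem_of_not_mem hx hue)
    obtain ⟨D', peb', hshifts, hfst, hmono, hsum⟩ :=
      ih (D := (f, u) ::ₘ D.erase (f, w)) (peb := peb₁)
        ((Multiset.erase_le_erase _ hle).trans (Multiset.le_cons_self _ _)) (by simp [peb₁])
    refine ⟨D', peb', .head ⟨f, w, u, hfw, huf, hu, rfl, rfl⟩ hshifts, ?_, ?_, ?_⟩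
    · rw [hfst, Multiset.map_cons, Multiset.map_erase_of_mem _ _ hfw]
      exact Multiset.cons_erase (Multiset.mem_map.mpr ⟨_, hfw, rfl⟩)
    · intro x hx
      exact (Nat.le_add_right _ _).trans ((hpeb₁e x hx).ge.trans (hmono x hx))
    · rw [hsum, Finset.sum_congr rfl hpeb₁e, Finset.sum_add_distrib, Finset.sum_ite_eq',
        if_neg hue]
      split_ifs <;> rfl

end ShiftPath

theorem PebbleReach.exists_shiftPath_of_sparse {V : Type*} [DecidableEq V] {k l : ℕ}
    {D : Multiset (Finset V × V)} {peb : V → ℕ} (h : PebbleReach k l D peb) {e : Finset V}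
    (hsp : Sparse k l (e ::ₘ D.map Prod.fst)) (hpeb : ∑ v ∈ e, peb v ≤ l) :
    ∃ u, ShiftPath e D u ∧ u ∉ e ∧ 1 ≤ peb u := by
  classical
  by_contra! hnone
  set R := (e ∪ D.toFinset.sup Prod.fst).filter (ShiftPath e D)
  have heR : e ⊆ R := fun v hv =>
    Finset.mem_filter.mpr ⟨Finset.mem_union_left _ hv, .base hv⟩
  have hR : ∀ p ∈ D, p.2 ∈ R → p.1 ⊆ R := fun p hp hpR v hv =>
    Finset.mem_filter.mpr
      ⟨Finset.mem_union_right _ (Finset.le_sup (f := Prod.fst) (Multiset.mem_toFinset.mpr hp) hv),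
        (Finset.mem_filter.mp hpR).2.of_mem_tail hp hv⟩
  have hpebR : ∑ v ∈ R, peb v = ∑ v ∈ e, peb v := by
    refine (Finset.sum_subset heR fun v hvR hve => ?_).symm
    have := hnone v (Finset.mem_filter.mp hvR).2 hve
    omega
  have hspan : spanCount (e ::ₘ D.map Prod.fst) R = spanCount (D.map Prod.fst) R + 1 := by
    simp [spanCount, heR, add_comm]
  have hcount := h.sum_peb_add_card_filter_tail R
  rw [card_filter_tail_eq_spanCount h.tail_mem_s16 hR, hpebR] at hcount
  have := hsp R (by omega)
  omega

theorem stmt_16_general {V : Type*} [DecidableEq V] (k l : ℕ)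
    (D : Multiset (Finset V × V)) (peb : V → ℕ) (h : PebbleReach k l D peb)
    (e : Finset V) (hsp : Sparse k l (e ::ₘ D.map Prod.fst))
    (hpeb : ∑ v ∈ e, peb v ≤ l) :
    ∃ (D' : Multiset (Finset V × V)) (peb' : V → ℕ),
      Relation.ReflTransGen ShiftStep (D, peb) (D', peb') ∧
      D'.map Prod.fst = D.map Prod.fst ∧
      (∀ v ∈ e, peb v ≤ peb' v) ∧
      (∑ v ∈ e, peb' v) = (∑ v ∈ e, peb v) + 1 := by
  obtain ⟨u, hpath, hue, hu⟩ := h.exists_shiftPath_of_sparse hsp hpeb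
  simpa [hue] using hpath.exists_shifts le_rfl hu

/-- If `(D, peb)` is reachable in the `(k,ℓ)`-pebble game, `e` is a nonempty vertex set
whose addition keeps the underlying hypergraph `(k,ℓ)`-sparse, and fewer than `ℓ+1`
pebbles lie on `e`, then by pebble-shift moves only one can bring one more pebble onto
`e` without removing any pebble already on `e`. -/
theorem stmt_16 {V : Type*} [DecidableEq V] (k l : ℕ) (hk : 1 ≤ k)
    (D : Multiset (Finset V × V)) (peb : V → ℕ) (h : PebbleReach k l D peb)
    (e : Finset V) (he : e.Nonempty) (hsp : Sparse k l (e ::ₘ D.map Prod.fst))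
    (hpeb : ∑ v ∈ e, peb v ≤ l) :
    ∃ (D' : Multiset (Finset V × V)) (peb' : V → ℕ),
      Relation.ReflTransGen ShiftStep (D, peb) (D', peb') ∧
      D'.map Prod.fst = D.map Prod.fst ∧
      (∀ v ∈ e, peb v ≤ peb' v) ∧
      (∑ v ∈ e, peb' v) = (∑ v ∈ e, peb v) + 1 :=
  stmt_16_general k l D peb h e hsp hpeb
end

section
/- Let k ≥ 1, s ≥ 1 and ℓ ≥ (s−1)·k be integers. Let G = (V,E) be an s-uniform (k,ℓ)-sparse hypergraph. Then G is critical: if H = (V,F) is a (k,ℓ)-sparse hypergraph representing G, i.e., there is a bijection f from the multiset E to the multiset F with f(e) ⊆ e for every e ∈ E, then f(e) = e for every e ∈ E (so H = G). -/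
/-! Every edge `f` of a `(k,ℓ)`-sparse hypergraph spans itself, so `1 + ℓ ≤ k|f|`; with
`ℓ ≥ (s-1)k` this forces `|f| ≥ s`. An edge of the representation is a subset of an
`s`-element edge of `G` and has at least `s` elements, hence equals it. -/

section

variable {V : Type*} [DecidableEq V]

theorem one_le_spanCount_of_mem {E : Multiset (Finset V)} {e : Finset V} (he : e ∈ E) :
    1 ≤ spanCount E e :=
  Multiset.card_pos_iff_exists_mem.mpr ⟨e, Multiset.mem_filter.mpr ⟨he, subset_rfl⟩⟩

theorem Sparse.lt_mul_card_of_mem {k l : ℕ} {E : Multiset (Finset V)} (hE : Sparse k l E)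
    {e : Finset V} (he : e ∈ E) : l < k * e.card := by
  have hspan := one_le_spanCount_of_mem he
  have := hE e hspan
  omega

theorem Sparse.le_card_of_mem {k s l : ℕ} (hl : (s - 1) * k ≤ l) {E : Multiset (Finset V)}
    (hE : Sparse k l E) {e : Finset V} (he : e ∈ E) : s ≤ e.card := by
  by_contra! hlt
  have : k * e.card ≤ (s - 1) * k := by
    rw [mul_comm]
    exact Nat.mul_le_mul_right k (Nat.le_sub_one_of_lt hlt)
  exact absurd (hE.lt_mul_card_of_mem he) (by omega)

end

theorem stmt_18_general {V : Type*} [DecidableEq V] (k s l : ℕ)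
    (hl : (s - 1) * k ≤ l) (E : Multiset (Finset V)) (hunif : ∀ e ∈ E, e.card = s)
    (F : Multiset (Finset V)) (hFsp : Sparse k l F)
    (R : Multiset (Finset V × Finset V))
    (hR₁ : R.map Prod.fst = E) (hR₂ : R.map Prod.snd = F)
    (hsub : ∀ p ∈ R, p.2 ⊆ p.1) :
    (∀ p ∈ R, p.2 = p.1) ∧ F = E := by
  have hfix : ∀ p ∈ R, p.2 = p.1 := by
    intro p hp
    have hcard : p.1.card = s := hunif _ (hR₁ ▸ Multiset.mem_map_of_mem _ hp)
    have hge : s ≤ p.2.card := hFsp.le_card_of_mem hl (hR₂ ▸ Multiset.mem_map_of_mem _ hp)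
    exact Finset.eq_of_subset_of_card_le (hsub p hp) (hcard ▸ hge)
  refine ⟨hfix, ?_⟩
  rw [← hR₂, ← hR₁]
  exact Multiset.map_congr rfl hfix

/-- Critical representations: for `ℓ ≥ (s-1)·k`, every `s`-uniform `(k,ℓ)`-sparse
hypergraph `G = (V,E)` is critical.  A representation of `G` by a `(k,ℓ)`-sparse
hypergraph `H = (V,F)` is encoded by a multiset `R` of pairs whose first components
give `E`, whose second components give `F`, and with each second component contained in
the corresponding first component; criticality says every such representation is `G`
itself. -/
theorem stmt_18 {V : Type*} [DecidableEq V] (k s l : ℕ) (hk : 1 ≤ k) (hs : 1 ≤ s)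
    (hl : (s - 1) * k ≤ l) (E : Multiset (Finset V)) (hunif : ∀ e ∈ E, e.card = s)
    (hsp : Sparse k l E)
    (F : Multiset (Finset V)) (hFne : ∀ e ∈ F, e.Nonempty) (hFsp : Sparse k l F)
    (R : Multiset (Finset V × Finset V))
    (hR₁ : R.map Prod.fst = E) (hR₂ : R.map Prod.snd = F)
    (hsub : ∀ p ∈ R, p.2 ⊆ p.1) :
    (∀ p ∈ R, p.2 = p.1) ∧ F = E :=
  stmt_18_general k s l hl E hunif F hFsp R hR₁ hR₂ hsub
end
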